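/- arXiv:2302.07664 — 4 statements merged into one kernel-verified Lean document; each statement's English description precedes it below -/
import Mathlib

section
/- Let L := Σ_{l≥1} (μ(l)/l)·log(1+X_l) ∈ R (this family is summable). Then (i) exp( Σ_{k≥1} (1/k)·ψ_k(L) ) = 1 + X₁, and (ii) Σ_{l≥1} (μ(l)/l)·log( ψ_l( exp( Σ_{k≥1} X_k/k ) ) ) = X₁; in both identities all indicated families are summable in the coefficientwise topology. (Under the identification p_m ↦ X_m these are the plethystic identities (E−1)∘L = h₁ = L∘(E−1), where E = Σ_{r≥0} h_r = exp(Σ_{k≥1} p_k/k) and L = Σ_{k≥1} (μ(k)/k) log(1+p_k).) -/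
/-!
The Euler operator `D` (multiplication of the coefficient of `X^e` by the total degree of `e`)
is a continuous derivation whose kernel consists of the constants. Comparing `D` of both sides
shows that `exp` and `log (1 + ·)` are mutually inverse on series without constant term.

The Adams operation `ψ_k` is the continuous ring endomorphism `rename (k * ·)`, so it commutes
with `exp` and `log`. Hence `L = Σ_l (μ(l)/l) ψ_l (log (1 + X₁))` and `log (ψ_l E) = ψ_l S` with
`S = Σ_k (1/k) ψ_k X₁` are built from Adams sums `Σ_l b(l) ψ_l g` of a series `g` in `X₁` alone.
Comparing coefficients of `X_n^m` gives `Σ_k a(k) ψ_k (Σ_l b(l) ψ_l g) = Σ_n (a * b)(n) ψ_n g`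
with `a * b` the Dirichlet convolution; for `a(n) = 1/n` and `b(n) = μ(n)/n`, in either order,
`a * b` is the unit, so the double sum collapses to `g`.
-/

noncomputable section

open scoped Classical

namespace Stmt0

instance : TopologicalSpace (MvPowerSeries ℕ+ ℚ) :=
  @Pi.topologicalSpace (ℕ+ →₀ ℕ) (fun _ => ℚ) (fun _ => ⊥)

abbrev R : Type := MvPowerSeries ℕ+ ℚ

def mexp (f : R) : R := ∑' n : ℕ, ((n.factorial : ℚ))⁻¹ • f ^ n

def mlog1p (f : R) : R := ∑' n : ℕ, ((-1 : ℚ) ^ n / (n + 1)) • f ^ (n + 1)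

def psi (k : ℕ+) (f : R) : R := fun e =>
  if h : ∃ e' : ℕ+ →₀ ℕ, Finsupp.mapDomain (fun m : ℕ+ => k * m) e' = e then
    MvPowerSeries.coeff h.choose f
  else 0

def Lfam (l : ℕ+) : R :=
  (((ArithmeticFunction.moebius (l : ℕ) : ℤ) : ℚ) / (l : ℚ)) • mlog1p (MvPowerSeries.X l)

def L : R := ∑' l : ℕ+, Lfam l

def Efam (k : ℕ+) : R := ((k : ℚ))⁻¹ • (MvPowerSeries.X k : R)

def E : R := mexp (∑' k : ℕ+, Efam k)

end Stmt0

namespace ArithmeticFunction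

variable {S : Type*} [CommSemiring S]

theorem pmul_mul_pmul {c : ArithmeticFunction S} (hc : ∀ m n, c (m * n) = c m * c n)
    (f g : ArithmeticFunction S) : c.pmul f * c.pmul g = c.pmul (f * g) := by
  ext n
  simp only [mul_apply, pmul_apply, Finset.mul_sum]
  refine Finset.sum_congr rfl fun x hx => ?_
  rw [← (Nat.mem_divisorsAntidiagonal.mp hx).1, hc]
  ring

theorem pmul_one {c : ArithmeticFunction S} (hc : c 1 = 1) : c.pmul 1 = 1 := by
  ext n
  rw [pmul_apply, one_apply]
  split_ifs with h <;> simp [h, hc]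

end ArithmeticFunction

namespace Stmt0

open MvPowerSeries Finsupp ArithmeticFunction

/- The topology on `R` is `MvPowerSeries.WithPiTopology` for the discrete topology on `ℚ`;
proofs that use Mathlib's results about it install `⊥` on `ℚ` locally. -/
instance : IsTopologicalRing R :=
  letI : TopologicalSpace ℚ := ⊥
  haveI : DiscreteTopology ℚ := ⟨rfl⟩
  WithPiTopology.instIsTopologicalRing ℕ+ ℚ

instance : T2Space R :=
  letI : TopologicalSpace ℚ := ⊥
  haveI : DiscreteTopology ℚ := ⟨rfl⟩
  WithPiTopology.instT2Space

section Coefficientwise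

variable {ι : Type*} {F : ι → R} {G : R}

theorem hasSum_of_coeff
    (h : ∀ e, ∃ s : Finset ι, (∀ i ∉ s, coeff e (F i) = 0) ∧
      coeff e G = ∑ i ∈ s, coeff e (F i)) : HasSum F G := by
  let _ : TopologicalSpace ℚ := ⊥
  have _ : DiscreteTopology ℚ := ⟨rfl⟩
  refine WithPiTopology.hasSum_iff_hasSum_coeff.mpr fun e => ?_
  obtain ⟨s, hs, hG⟩ := h e
  rw [hG]
  exact hasSum_sum_of_ne_finset_zero hs

theorem summable_of_coeff (h : ∀ e, ∃ s : Finset ι, ∀ i ∉ s, coeff e (F i) = 0) :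
    Summable F := by
  choose s hs using h
  exact ⟨fun e => ∑ i ∈ s e, coeff e (F i), hasSum_of_coeff fun e => ⟨s e, hs e, rfl⟩⟩

theorem coeff_eq_sum_of_hasSum (hF : HasSum F G) {e : ℕ+ →₀ ℕ} (s : Finset ι)
    (hs : ∀ i ∉ s, coeff e (F i) = 0) : coeff e G = ∑ i ∈ s, coeff e (F i) := by
  let _ : TopologicalSpace ℚ := ⊥
  have _ : DiscreteTopology ℚ := ⟨rfl⟩
  exact (WithPiTopology.hasSum_iff_hasSum_coeff.mp hF e).unique
    (hasSum_sum_of_ne_finset_zero hs)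

theorem continuous_of_coeff {f : R → R}
    (hf : ∀ e, ∃ (d : ℕ+ →₀ ℕ) (c : ℚ), ∀ g, coeff e (f g) = c * coeff d g) :
    Continuous f := by
  let _ : TopologicalSpace ℚ := ⊥
  have _ : DiscreteTopology ℚ := ⟨rfl⟩
  refine continuous_pi fun e => ?_
  obtain ⟨d, c, h⟩ := hf e
  have : (fun g => f g e) = (fun q : ℚ => c * q) ∘ coeff d := funext h
  rw [this]
  exact continuous_of_discreteTopology.comp (WithPiTopology.continuous_coeff ℚ d)

end Coefficientwise

section ExpLog

variable {f : R}

theorem coeff_pow_eq_zero_of_degree_lt (hf : constantCoeff f = 0) {n : ℕ} {e : ℕ+ →₀ ℕ}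
    (h : e.degree < n) : coeff e (f ^ n) = 0 :=
  coeff_of_lt_order ((Nat.cast_lt.mpr h).trans_le (le_order_pow_of_constantCoeff_eq_zero n hf))

theorem summable_smul_pow (hf : constantCoeff f = 0) (c : ℕ → ℚ) {d : ℕ → ℕ}
    (hd : ∀ n, n ≤ d n) : Summable fun n => c n • f ^ d n :=
  summable_of_coeff fun e => ⟨Finset.range (e.degree + 1), fun n hn => by
    rw [Finset.mem_range, not_lt] at hn
    rw [coeff_smul, coeff_pow_eq_zero_of_degree_lt hf (by have := hd n; omega), mul_zero]⟩

theorem hasSum_mexp (hf : constantCoeff f = 0) :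
    HasSum (fun n : ℕ => ((n.factorial : ℚ))⁻¹ • f ^ n) (mexp f) :=
  (summable_smul_pow hf _ fun _ => le_rfl).hasSum

theorem hasSum_mlog1p (hf : constantCoeff f = 0) :
    HasSum (fun n : ℕ => ((-1 : ℚ) ^ n / (n + 1)) • f ^ (n + 1)) (mlog1p f) :=
  (summable_smul_pow hf _ fun n => n.le_succ).hasSum

theorem constantCoeff_mexp (hf : constantCoeff f = 0) : constantCoeff (mexp f) = 1 := by
  rw [← coeff_zero_eq_constantCoeff_apply,
    coeff_eq_sum_of_hasSum (hasSum_mexp hf) {0} fun n hn => by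
      rw [coeff_smul, coeff_pow_eq_zero_of_degree_lt hf (by simpa [Nat.pos_iff_ne_zero] using hn),
        mul_zero]]
  simp

theorem constantCoeff_mlog1p (hf : constantCoeff f = 0) : constantCoeff (mlog1p f) = 0 := by
  rw [← coeff_zero_eq_constantCoeff_apply,
    coeff_eq_sum_of_hasSum (hasSum_mlog1p hf) ∅ fun n _ => by
      rw [coeff_smul, coeff_pow_eq_zero_of_degree_lt hf (by simp), mul_zero]]
  simp

end ExpLog

section EulerOperator

def eulerOp : Derivation ℚ R R :=
  Derivation.mk'
    { toFun f e := e.degree * coeff e f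
      map_add' f g := by ext e; exact mul_add _ _ _
      map_smul' c f := by ext e; exact mul_left_comm _ _ _ }
    fun f g => by
      ext e
      change (e.degree : ℚ) * coeff e (f * g) = coeff e (f * _ + g * _)
      rw [map_add, mul_comm g, coeff_mul, coeff_mul, coeff_mul, Finset.mul_sum,
        ← Finset.sum_add_distrib]
      refine Finset.sum_congr rfl fun p hp => ?_
      rw [← Finset.HasAntidiagonal.mem_antidiagonal.mp hp]
      change _ = coeff p.1 f * (p.2.degree * coeff p.2 g) +
        p.1.degree * coeff p.1 f * coeff p.2 g
      rw [map_add, Nat.cast_add]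
      ring

theorem coeff_eulerOp (f : R) (e : ℕ+ →₀ ℕ) :
    coeff e (eulerOp f) = e.degree * coeff e f := rfl

theorem continuous_eulerOp : Continuous eulerOp :=
  continuous_of_coeff fun e => ⟨e, e.degree, fun _ => rfl⟩

theorem eq_of_eulerOp_eq {f g : R} (h : eulerOp f = eulerOp g)
    (h0 : constantCoeff f = constantCoeff g) : f = g := by
  ext e
  rcases eq_or_ne e 0 with rfl | he
  · simpa using h0
  · have hdeg : (e.degree : ℚ) ≠ 0 := by simpa [degree_eq_zero_iff] using he
    simpa [coeff_eulerOp, hdeg] using congrArg (coeff e) h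

theorem eq_of_eulerOp_mul_eq {u v : R} (hv : IsUnit v) (h : eulerOp u * v = u * eulerOp v)
    (h0 : constantCoeff u = constantCoeff v) : u = v := by
  obtain ⟨w, hvw⟩ := hv.exists_right_inv
  have hw : eulerOp w = -w ^ 2 * eulerOp v :=
    eulerOp.leibniz_of_mul_eq_one ((mul_comm w v).trans hvw)
  have hD : eulerOp (u * w) = eulerOp 1 := by
    rw [eulerOp.leibniz, Derivation.map_one_eq_zero, hw, smul_eq_mul, smul_eq_mul]
    linear_combination (-(w * eulerOp u)) * hvw + w ^ 2 * h
  have hq : u * w = 1 := eq_of_eulerOp_eq hD (by rw [map_mul, h0, ← map_mul, hvw])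
  calc u = u * w * v := by rw [mul_assoc, mul_comm w, hvw, mul_one]
    _ = v := by rw [hq, one_mul]

end EulerOperator

section ExpLogInverse

variable {f : R}

theorem eulerOp_mexp (hf : constantCoeff f = 0) : eulerOp (mexp f) = eulerOp f * mexp f := by
  have hterm (n : ℕ) : eulerOp ((((n + 1).factorial : ℚ))⁻¹ • f ^ (n + 1))
      = eulerOp f * ((n.factorial : ℚ)⁻¹ • f ^ n) := by
    rw [Derivation.map_smul, Derivation.leibniz_pow, Nat.add_sub_cancel,
      ← Nat.cast_smul_eq_nsmul ℚ, smul_smul, Nat.factorial_succ, Nat.cast_mul, mul_inv,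
      mul_right_comm, inv_mul_cancel₀ (by positivity), one_mul, smul_eq_mul, mul_comm,
      mul_smul_comm]
  have hshift := (hasSum_mexp hf).mul_left (eulerOp f)
  simp only [← hterm] at hshift
  refine ((hasSum_mexp hf).map eulerOp continuous_eulerOp).unique ?_
  exact (hasSum_nat_add_iff' 1).mp (by simpa using hshift)

theorem mul_eulerOp_mlog1p (hf : constantCoeff f = 0) :
    (1 + f) * eulerOp (mlog1p f) = eulerOp f := by
  let _ : TopologicalSpace ℚ := ⊥
  have _ : DiscreteTopology ℚ := ⟨rfl⟩
  have hneg : constantCoeff (-f) = 0 := by rw [map_neg, hf, neg_zero]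
  have hterm (n : ℕ) :
      eulerOp (((-1 : ℚ) ^ n / (n + 1)) • f ^ (n + 1)) = (-f) ^ n * eulerOp f := by
    rw [Derivation.map_smul, Derivation.leibniz_pow, Nat.add_sub_cancel,
      ← Nat.cast_smul_eq_nsmul ℚ, smul_smul, Nat.cast_succ, div_mul_cancel₀ _ (by positivity),
      smul_eq_mul]
    simp only [Algebra.smul_def, map_pow, map_neg, map_one, neg_pow f, mul_assoc]
  have hlog := (hasSum_mlog1p hf).map eulerOp continuous_eulerOp
  simp only [Function.comp_def, hterm] at hlog
  have hsum : Summable fun n => (-f) ^ n :=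
    WithPiTopology.summable_pow_of_constantCoeff_eq_zero hneg
  have hgeom : (∑' n, (-f) ^ n) * (1 - -f) = 1 :=
    WithPiTopology.tsum_pow_mul_one_sub_of_constantCoeff_eq_zero hneg
  rw [← hlog.tsum_eq, hsum.tsum_mul_right, ← mul_assoc, mul_comm (1 + f), ← sub_neg_eq_add,
    hgeom, one_mul]

theorem mexp_mlog1p (hf : constantCoeff f = 0) : mexp (mlog1p f) = 1 + f := by
  have hlog := constantCoeff_mlog1p hf
  refine eq_of_eulerOp_mul_eq ?_ ?_ ?_
  · simp [isUnit_iff_constantCoeff, hf]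
  · rw [eulerOp_mexp hlog, map_add, Derivation.map_one_eq_zero, zero_add, mul_right_comm,
      mul_comm _ (1 + f), mul_eulerOp_mlog1p hf, mul_comm]
  · simp [constantCoeff_mexp hlog, hf]

theorem mlog1p_mexp_sub_one (hf : constantCoeff f = 0) : mlog1p (mexp f - 1) = f := by
  have hexp := constantCoeff_mexp hf
  have hsub : constantCoeff (mexp f - 1) = 0 := by simp [hexp]
  have hD := mul_eulerOp_mlog1p hsub
  rw [add_sub_cancel, map_sub, Derivation.map_one_eq_zero, sub_zero, eulerOp_mexp hf,
    mul_comm _ (mexp f)] at hD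
  refine eq_of_eulerOp_eq ?_ (by simp [constantCoeff_mlog1p hsub, hf])
  exact (isUnit_iff_constantCoeff.mpr (by simp [hexp])).mul_left_cancel hD

end ExpLogInverse

section Adams

theorem coeff_psi_mapDomain (k : ℕ+) (f : R) (e : ℕ+ →₀ ℕ) :
    coeff (mapDomain (k * ·) e) (psi k f) = coeff e f := by
  have h : ∃ e', mapDomain (k * ·) e' = mapDomain (k * ·) e := ⟨e, rfl⟩
  change (if h : _ then _ else _) = _
  rw [dif_pos h, mapDomain_injective (mul_right_injective k) h.choose_spec]

theorem coeff_psi_of_notMem_range {k : ℕ+} (f : R) {e : ℕ+ →₀ ℕ}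
    (h : e ∉ Set.range (mapDomain (k * ·))) : coeff e (psi k f) = 0 :=
  dif_neg h

theorem exists_of_coeff_psi_ne_zero {k : ℕ+} {f : R} {e : ℕ+ →₀ ℕ}
    (h : coeff e (psi k f) ≠ 0) : ∃ e', mapDomain (k * ·) e' = e ∧ coeff e' f ≠ 0 := by
  by_cases he : e ∈ Set.range (mapDomain (k * ·))
  · obtain ⟨e', rfl⟩ := he
    exact ⟨e', rfl, by rwa [coeff_psi_mapDomain] at h⟩
  · exact absurd (coeff_psi_of_notMem_range f he) h

theorem psi_eq_rename (k : ℕ+) : psi k = rename (R := ℚ) (mulLeftEmbedding k) := by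
  funext f
  ext e
  by_cases he : e ∈ Set.range (mapDomain (k * ·))
  · obtain ⟨e, rfl⟩ := he
    have h := coeff_embDomain_rename (mulLeftEmbedding k) f e
    rw [embDomain_eq_mapDomain] at h
    rw [coeff_psi_mapDomain]
    exact h.symm
  · rw [coeff_psi_of_notMem_range f he, coeff_rename_eq_zero (mulLeftEmbedding k) f he]

theorem continuous_psi (k : ℕ+) : Continuous (psi k) := by
  refine continuous_of_coeff fun e => ?_
  by_cases he : e ∈ Set.range (mapDomain (k * ·))
  · obtain ⟨e, rfl⟩ := he
    exact ⟨e, 1, fun f => by rw [coeff_psi_mapDomain, one_mul]⟩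
  · exact ⟨e, 0, fun f => by rw [coeff_psi_of_notMem_range f he, zero_mul]⟩

theorem psi_X (k m : ℕ+) : psi k (X m) = X (k * m) := by
  rw [psi_eq_rename, rename_X]
  rfl

theorem psi_one_left (f : R) : psi 1 f = f := by
  ext e
  have h := coeff_psi_mapDomain 1 f e
  simp only [one_mul] at h
  rwa [show (fun x : ℕ+ => x) = id from rfl, mapDomain_id] at h

theorem constantCoeff_psi (k : ℕ+) (f : R) : constantCoeff (psi k f) = constantCoeff f := by
  rw [psi_eq_rename, constantCoeff_rename]

theorem psi_tsum_smul_pow (k : ℕ+) {f : R} (hf : constantCoeff f = 0) (c : ℕ → ℚ) {d : ℕ → ℕ}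
    (hd : ∀ n, n ≤ d n) : psi k (∑' n, c n • f ^ d n) = ∑' n, c n • psi k f ^ d n := by
  have h := (summable_smul_pow hf c hd).hasSum.map (rename (R := ℚ) (mulLeftEmbedding k))
    (psi_eq_rename k ▸ continuous_psi k)
  simp only [Function.comp_def, map_smul, map_pow] at h
  rw [← psi_eq_rename] at h
  exact h.tsum_eq.symm

theorem psi_mexp (k : ℕ+) {f : R} (hf : constantCoeff f = 0) :
    psi k (mexp f) = mexp (psi k f) :=
  psi_tsum_smul_pow k hf _ fun _ => le_rfl

theorem psi_mlog1p (k : ℕ+) {f : R} (hf : constantCoeff f = 0) :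
    psi k (mlog1p f) = mlog1p (psi k f) :=
  psi_tsum_smul_pow k hf _ fun n => n.le_succ

end Adams

section SeriesInVar

def IsSeriesInVar (j : ℕ+) (f : R) : Prop :=
  ∀ e, coeff e f ≠ 0 → ∃ m, e = single j (m + 1)

variable {j : ℕ+} {f : R}

theorem IsSeriesInVar.smul (hf : IsSeriesInVar j f) (c : ℚ) : IsSeriesInVar j (c • f) :=
  fun e he => hf e (right_ne_zero_of_mul (by rwa [← coeff_smul]))

theorem IsSeriesInVar.map_psi (hf : IsSeriesInVar j f) (k : ℕ+) :
    IsSeriesInVar (k * j) (psi k f) := by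
  intro e he
  obtain ⟨e', rfl, he'⟩ := exists_of_coeff_psi_ne_zero he
  obtain ⟨m, rfl⟩ := hf e' he'
  exact ⟨m, mapDomain_single⟩

theorem IsSeriesInVar.smul_psi {g : R} (hg : IsSeriesInVar 1 g) (c : ℕ+ → ℚ) (j : ℕ+) :
    IsSeriesInVar j (c j • psi j g) := by
  simpa using (hg.map_psi j).smul (c j)

theorem isSeriesInVar_X_pow (j : ℕ+) (n : ℕ) : IsSeriesInVar j (X j ^ (n + 1)) := fun e he =>
  ⟨n, by simpa [coeff_X_pow] using he⟩

theorem IsSeriesInVar.of_hasSum {ι : Type*} {F : ι → R} (hF : ∀ i, IsSeriesInVar j (F i))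
    (h : HasSum F f) : IsSeriesInVar j f := by
  intro e he
  by_contra! hne
  refine he (coeff_eq_sum_of_hasSum h ∅ fun i _ => ?_)
  by_contra hi
  obtain ⟨m, rfl⟩ := hF i e hi
  exact hne m rfl

theorem isSeriesInVar_mlog1p_X (j : ℕ+) : IsSeriesInVar j (mlog1p (X j)) :=
  .of_hasSum (fun n => (isSeriesInVar_X_pow j n).smul _) (hasSum_mlog1p (constantCoeff_X j))

variable {F : ℕ+ → R}

theorem summable_of_isSeriesInVar (hF : ∀ j, IsSeriesInVar j (F j)) : Summable F :=
  summable_of_coeff fun e => ⟨e.support, fun j hj => by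
    by_contra h
    obtain ⟨m, rfl⟩ := hF j e h
    simp at hj⟩

theorem coeff_single_tsum_of_isSeriesInVar (hF : ∀ j, IsSeriesInVar j (F j)) (n : ℕ+)
    (m : ℕ) : coeff (single n (m + 1)) (∑' j, F j) = coeff (single n (m + 1)) (F n) := by
  rw [coeff_eq_sum_of_hasSum (summable_of_isSeriesInVar hF).hasSum {n} fun j hj => ?_,
    Finset.sum_singleton]
  by_contra h
  obtain ⟨m', hm'⟩ := hF j _ h
  obtain ⟨rfl, -⟩ := ((single_eq_single_iff _ _ _ _).mp hm').resolve_right (by omega)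
  exact hj (Finset.mem_singleton_self n)

theorem coeff_tsum_eq_zero_of_isSeriesInVar (hF : ∀ j, IsSeriesInVar j (F j))
    {e : ℕ+ →₀ ℕ} (he : ∀ n m, e ≠ single n (m + 1)) : coeff e (∑' j, F j) = 0 := by
  rw [coeff_eq_sum_of_hasSum (summable_of_isSeriesInVar hF).hasSum ∅ fun j _ => ?_,
    Finset.sum_empty]
  by_contra h
  obtain ⟨m, rfl⟩ := hF j e h
  exact he j m rfl

theorem coeff_psi_tsum_eq_zero_of_isSeriesInVar (hF : ∀ j, IsSeriesInVar j (F j)) (k : ℕ+)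
    {e : ℕ+ →₀ ℕ} (he : ∀ n m, e ≠ single n (m + 1)) : coeff e (psi k (∑' j, F j)) = 0 := by
  by_contra hc
  obtain ⟨e', rfl, he'⟩ := exists_of_coeff_psi_ne_zero hc
  obtain ⟨n, m, rfl⟩ : ∃ n m, e' = single n (m + 1) := by
    by_contra! h
    exact he' (coeff_tsum_eq_zero_of_isSeriesInVar hF h)
  exact he (k * n) m mapDomain_single

end SeriesInVar

section Moebius

def invId : ArithmeticFunction ℚ := ⟨fun n => (n : ℚ)⁻¹, by simp⟩

theorem invId_apply (n : ℕ) : invId n = (n : ℚ)⁻¹ := rfl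

theorem invId_mul_pmul_moebius : invId * invId.pmul (moebius : ArithmeticFunction ℚ) = 1 := by
  have hc (m n : ℕ) : invId (m * n) = invId m * invId n := by
    simp [invId_apply, mul_comm]
  calc invId * invId.pmul (moebius : ArithmeticFunction ℚ)
      = invId.pmul (zeta : ArithmeticFunction ℚ) * invId.pmul (moebius : ArithmeticFunction ℚ) := by
        rw [pmul_zeta]
    _ = 1 := by
      rw [pmul_mul_pmul hc, coe_zeta_mul_coe_moebius, pmul_one (by simp [invId_apply])]

end Moebius

section AdamsConvolution

theorem coeff_psi_single_mul (k l : ℕ+) (m : ℕ) (f : R) :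
    coeff (single (k * l) m) (psi k f) = coeff (single l m) f := by
  rw [← coeff_psi_mapDomain k f, mapDomain_single]

theorem coeff_psi_single_of_not_dvd {k n : ℕ+} (h : ¬k ∣ n) {m : ℕ} (hm : m ≠ 0) (f : R) :
    coeff (single n m) (psi k f) = 0 := by
  by_contra hc
  obtain ⟨e', he', -⟩ := exists_of_coeff_psi_ne_zero hc
  have hn : n ∈ (mapDomain (k * ·) e').support := by simp [he', hm]
  obtain ⟨l, -, rfl⟩ := Finset.mem_image.mp (mapDomain_support hn)
  exact h (dvd_mul_right k l)

theorem hasSum_smul_psi_tsum_smul_psi {g : R} (hg : IsSeriesInVar 1 g)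
    (a b : ArithmeticFunction ℚ) :
    HasSum (fun k : ℕ+ => a k • psi k (∑' l : ℕ+, b l • psi l g))
      (∑' n : ℕ+, (a * b) n • psi n g) := by
  have hg_single (n : ℕ+) (m : ℕ) :
      coeff (single n (m + 1)) (psi n g) = coeff (single 1 (m + 1)) g := by
    simpa using coeff_psi_single_mul n 1 (m + 1) g
  -- At `single n (m + 1)` the `k`-th term is `a k * b (n / k) * coeff (single 1 (m + 1)) g`
  -- for `k ∣ n` and `0` otherwise; off such exponents every coefficient vanishes.
  refine hasSum_of_coeff fun e => ?_
  by_cases he : ∃ n m, e = single n (m + 1)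
  · obtain ⟨n, m, rfl⟩ := he
    refine ⟨(n : ℕ).divisors.preimage PNat.val PNat.coe_injective.injOn, fun k hk => ?_, ?_⟩
    · rw [coeff_smul, coeff_psi_single_of_not_dvd _ m.succ_ne_zero, mul_zero]
      simpa [PNat.dvd_iff] using hk
    rw [coeff_single_tsum_of_isSeriesInVar (hg.smul_psi _), coeff_smul, hg_single,
      ArithmeticFunction.mul_apply, Nat.sum_divisorsAntidiagonal (fun x y => a x * b y),
      Finset.sum_mul,
      ← Finset.sum_preimage PNat.val _ PNat.coe_injective.injOn _ fun d hd hdr =>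
        absurd ⟨⟨d, Nat.pos_of_mem_divisors hd⟩, rfl⟩ hdr]
    refine Finset.sum_congr rfl fun k hk => ?_
    obtain ⟨l, rfl⟩ : k ∣ n := by simpa [PNat.dvd_iff] using hk
    rw [coeff_smul, coeff_psi_single_mul, coeff_single_tsum_of_isSeriesInVar (hg.smul_psi _),
      coeff_smul, hg_single, PNat.mul_coe, Nat.mul_div_cancel_left _ k.pos, mul_assoc]
  · push Not at he
    refine ⟨∅, fun k _ => ?_, ?_⟩
    · rw [coeff_smul, coeff_psi_tsum_eq_zero_of_isSeriesInVar (hg.smul_psi _) k he, mul_zero]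
    · rw [coeff_tsum_eq_zero_of_isSeriesInVar (hg.smul_psi _) he, Finset.sum_empty]

theorem tsum_one_smul_psi (g : R) : ∑' n : ℕ+, (1 : ArithmeticFunction ℚ) n • psi n g = g := by
  rw [tsum_eq_single 1 fun n hn => by simp [one_apply, hn], PNat.one_coe, one_one, one_smul,
    psi_one_left]

end AdamsConvolution

section Plethysm

theorem moebius_div_eq_pmul (l : ℕ) :
    ((moebius l : ℤ) : ℚ) / (l : ℚ) = invId.pmul (moebius : ArithmeticFunction ℚ) l := by
  rw [pmul_apply, invId_apply, intCoe_apply, div_eq_inv_mul]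

theorem Lfam_eq (l : ℕ+) :
    Lfam l = invId.pmul (moebius : ArithmeticFunction ℚ) l • psi l (mlog1p (X 1)) := by
  rw [Lfam, moebius_div_eq_pmul, psi_mlog1p l (constantCoeff_X 1), psi_X, mul_one]

theorem Efam_eq (k : ℕ+) : Efam k = invId k • psi k (X 1) := by
  rw [Efam, psi_X, mul_one, invId_apply]

theorem isSeriesInVar_X_one : IsSeriesInVar 1 (X 1) := by
  simpa using isSeriesInVar_X_pow 1 0

theorem summable_Lfam : Summable Lfam := by
  rw [funext Lfam_eq]
  exact summable_of_isSeriesInVar ((isSeriesInVar_mlog1p_X 1).smul_psi _)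

theorem summable_Efam : Summable Efam := by
  rw [funext Efam_eq]
  exact summable_of_isSeriesInVar (isSeriesInVar_X_one.smul_psi _)

theorem hasSum_inv_smul_psi_L :
    HasSum (fun k : ℕ+ => ((k : ℚ))⁻¹ • psi k L) (mlog1p (X 1)) := by
  have h := hasSum_smul_psi_tsum_smul_psi (isSeriesInVar_mlog1p_X 1) invId
    (invId.pmul (moebius : ArithmeticFunction ℚ))
  rwa [invId_mul_pmul_moebius, tsum_one_smul_psi, ← tsum_congr Lfam_eq] at h

theorem constantCoeff_tsum_Efam : constantCoeff (∑' k, Efam k) = 0 := by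
  rw [tsum_congr Efam_eq, ← coeff_zero_eq_constantCoeff_apply,
    coeff_tsum_eq_zero_of_isSeriesInVar (isSeriesInVar_X_one.smul_psi _) fun n m h =>
      (single_ne_zero.mpr m.succ_ne_zero) h.symm]

theorem hasSum_moebius_smul_mlog1p_psi_E :
    HasSum (fun l : ℕ+ =>
        (((moebius (l : ℕ) : ℤ) : ℚ) / (l : ℚ)) • mlog1p (psi l E - 1)) (X 1) := by
  have h := hasSum_smul_psi_tsum_smul_psi isSeriesInVar_X_one
    (invId.pmul (moebius : ArithmeticFunction ℚ)) invId
  rw [mul_comm, invId_mul_pmul_moebius, tsum_one_smul_psi, ← tsum_congr Efam_eq] at h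
  simpa only [moebius_div_eq_pmul, E, psi_mexp _ constantCoeff_tsum_Efam,
    mlog1p_mexp_sub_one ((constantCoeff_psi _ _).trans constantCoeff_tsum_Efam)] using h

end Plethysm

/-- Plethystic identities `(E−1) ∘ L = h₁ = L ∘ (E−1)` under `p_m ↦ X_m`. -/
theorem statement :
    Summable Lfam ∧ Summable Efam ∧
    (Summable (fun k : ℕ+ => ((k : ℚ))⁻¹ • psi k L) ∧
      mexp (∑' k : ℕ+, ((k : ℚ))⁻¹ • psi k L) = 1 + MvPowerSeries.X 1) ∧
    (Summable (fun l : ℕ+ =>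
        (((ArithmeticFunction.moebius (l : ℕ) : ℤ) : ℚ) / (l : ℚ)) • mlog1p (psi l E - 1)) ∧
      (∑' l : ℕ+,
        (((ArithmeticFunction.moebius (l : ℕ) : ℤ) : ℚ) / (l : ℚ)) • mlog1p (psi l E - 1)) =
        MvPowerSeries.X 1) := by
  have hL := hasSum_inv_smul_psi_L
  have hE := hasSum_moebius_smul_mlog1p_psi_E
  refine ⟨summable_Lfam, summable_Efam, ⟨hL.summable, ?_⟩, hE.summable, hE.tsum_eq⟩
  rw [hL.tsum_eq, mexp_mlog1p (constantCoeff_X 1)]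

end Stmt0
end
end

section
/- Let x, y ∈ R with y having zero constant coefficient. Then exp( Σ_{k≥1} (1/k)·ψ_k( x · Σ_{l≥1} (μ(l)/l)·log(1+ψ_l(y)) ) ) = ∏_{n≥1} exp( ( (1/n)·Σ_{d∣n} μ(n/d)·ψ_d(x) ) · log(1+ψ_n(y)) ), where all indicated families are summable and the infinite product converges in the coefficientwise topology (the n-th factor differs from 1 only in monomials involving variables X_m with m ≥ n). (Under the identification p_m ↦ X_m this is the plethystic identity Exp(x·Log(1+y)) = ∏_{n≥1} (1+ψ_n(y))^{(1/n)Σ_{d∣n} μ(n/d) ψ_d(x)}, where Exp and Log are the plethystic exponential and logarithm.) -/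
/-!
Write `L n = log (1 + ψ_n y)`. Since `ψ_k` is a continuous ring endomorphism with
`ψ_k ∘ ψ_l = ψ_{kl}`, it commutes with `log (1 + ·)` and `ψ_k (L l) = L (k l)`. Hence the
exponent on the left is the sum of the double family `μ(l)/(k l) · ψ_k(x) · L (k l)` over
`(k, l)`, summed first over `l`. Summing the same family instead over the fibres `k l = n` gives
the logarithms of the factors on the right. All these families are coefficientwise finite
because `L n` only involves monomials containing some `X_m` with `m ≥ n`; so the regrouping is
legitimate, and `exp` turns the sum into the product because `exp (f + g) = exp f * exp g` and
`exp` is continuous on series with zero constant coefficient.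
-/

noncomputable section

open scoped Classical

namespace Stmt1

/-- The coefficientwise topology on the big power series ring: the product topology,
with the discrete topology on each (rational) coefficient. -/
instance : TopologicalSpace (MvPowerSeries ℕ+ ℚ) :=
  @Pi.topologicalSpace (ℕ+ →₀ ℕ) (fun _ => ℚ) (fun _ => ⊥)

abbrev R : Type := MvPowerSeries ℕ+ ℚ

/-- `exp f = Σ_{n ≥ 0} fⁿ/n!` (intended for `f` with zero constant coefficient,
where the sum is coefficientwise finite). -/
def mexp (f : R) : R := ∑' n : ℕ, ((n.factorial : ℚ))⁻¹ • f ^ n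

/-- `log (1 + f) = Σ_{n ≥ 1} (−1)^{n+1} fⁿ / n` (intended for `f` with zero constant
coefficient, where the sum is coefficientwise finite). -/
def mlog1p (f : R) : R := ∑' n : ℕ, ((-1 : ℚ) ^ n / (n + 1)) • f ^ (n + 1)

/-- The `k`-th Adams operation `ψ_k`: the relabelling of monomials induced by
`X_m ↦ X_{k·m}` for all `m ≥ 1`.  (It is the continuous `ℚ`-algebra endomorphism
determined by `ψ_k (X_m) = X_{k m}`.) -/
def psi (k : ℕ+) (f : R) : R := fun e =>
  if h : ∃ e' : ℕ+ →₀ ℕ, Finsupp.mapDomain (fun m : ℕ+ => k * m) e' = e then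
    MvPowerSeries.coeff h.choose f
  else 0

/-- The summand `(μ(l)/l)·log(1+ψ_l(y))`. -/
def logFam (y : R) (l : ℕ+) : R :=
  (((ArithmeticFunction.moebius (l : ℕ) : ℤ) : ℚ) / (l : ℚ)) • mlog1p (psi l y)

/-- The summand `(1/k)·ψ_k ( x · Σ_{l≥1} (μ(l)/l)·log(1+ψ_l(y)) )`. -/
def expFam (x y : R) (k : ℕ+) : R :=
  ((k : ℚ))⁻¹ • psi k (x * ∑' l : ℕ+, logFam y l)

/-- The `n`-th factor of the infinite product:
`exp ( ((1/n)·Σ_{d∣n} μ(n/d)·ψ_d(x)) · log(1+ψ_n(y)) )`,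
i.e. `(1+ψ_n(y))^{(1/n)·Σ_{d∣n} μ(n/d)·ψ_d(x)}` interpreted via the binomial series. -/
def prodFam (x y : R) (n : ℕ+) : R :=
  mexp ((((n : ℚ))⁻¹ •
      ∑ d ∈ (n : ℕ).divisors.attach,
        ((ArithmeticFunction.moebius ((n : ℕ) / (d : ℕ)) : ℤ) : ℚ) •
          psi ⟨(d : ℕ), Nat.pos_of_mem_divisors d.2⟩ x) *
    mlog1p (psi n y))

open MvPowerSeries Finset Filter Topology
open scoped Nat ArithmeticFunction.Moebius

-- The frozen topology on `R` is `WithPiTopology` for the discrete topology on `ℚ` (not for the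
-- global instance on `ℚ`), so Mathlib's API for it applies after a local change of instance.
instance : IsTopologicalRing R :=
  letI : TopologicalSpace ℚ := ⊥
  haveI : DiscreteTopology ℚ := ⟨rfl⟩
  WithPiTopology.instIsTopologicalRing ℕ+ ℚ

instance : T3Space R :=
  letI : TopologicalSpace ℚ := ⊥
  haveI : DiscreteTopology ℚ := ⟨rfl⟩
  inferInstanceAs (T3Space ((ℕ+ →₀ ℕ) → ℚ))

theorem tendsto_iff_coeff {α : Type*} {l : Filter α} {F : α → R} {G : R} :
    Tendsto F l (𝓝 G) ↔ ∀ e, ∀ᶠ a in l, coeff e (F a) = coeff e G := by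
  let _ : TopologicalSpace ℚ := ⊥
  have : DiscreteTopology ℚ := ⟨rfl⟩
  exact (WithPiTopology.tendsto_iff_coeff_tendsto F l G).trans (by
    simp only [nhds_discrete, tendsto_pure])

theorem summable_of_finite_coeff {ι : Type*} {F : ι → R}
    (h : ∀ e, {i | coeff e (F i) ≠ 0}.Finite) : Summable F := by
  let _ : TopologicalSpace ℚ := ⊥
  have : DiscreteTopology ℚ := ⟨rfl⟩
  exact WithPiTopology.summable_iff_summable_coeff.2 fun e => summable_of_hasFiniteSupport (h e)

theorem coeff_tsum {ι : Type*} {F : ι → R} (hF : Summable F) {e : ℕ+ →₀ ℕ} {s : Finset ι}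
    (h : ∀ i ∉ s, coeff e (F i) = 0) : coeff e (∑' i, F i) = ∑ i ∈ s, coeff e (F i) := by
  let _ : TopologicalSpace ℚ := ⊥
  have : DiscreteTopology ℚ := ⟨rfl⟩
  exact (WithPiTopology.hasSum_iff_hasSum_coeff.1 hF.hasSum e).unique
    (hasSum_sum_of_ne_finset_zero h)

theorem summable_of_le_order {ι : Type*} {F : ι → R} (w : ι → ℕ)
    (hw : ∀ N, {i | w i ≤ N}.Finite) (h : ∀ i, (w i : ℕ∞) ≤ (F i).order) : Summable F :=
  summable_of_finite_coeff fun e => (hw e.degree).subset fun i hi => by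
    by_contra hlt
    exact hi (coeff_of_lt_order ((Nat.cast_lt.2 (not_le.1 hlt)).trans_le (h i)))

section Exp

variable {f g : R}

theorem le_order_smul_pow (c : ℚ) (hf : constantCoeff f = 0) (n : ℕ) :
    (n : ℕ∞) ≤ (c • f ^ n).order :=
  (le_order_pow_of_constantCoeff_eq_zero n hf).trans le_order_smul

theorem summable_smul_pow (c : ℕ → ℚ) (hf : constantCoeff f = 0) :
    Summable fun n => c n • f ^ n :=
  summable_of_le_order id Set.finite_le_nat fun n => le_order_smul_pow (c n) hf n

theorem coeff_mexp (hf : constantCoeff f = 0) (e : ℕ+ →₀ ℕ) :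
    coeff e (mexp f) = ∑ n ∈ range (e.degree + 1), (n ! : ℚ)⁻¹ * coeff e (f ^ n) := by
  rw [mexp, coeff_tsum (summable_smul_pow _ hf) (s := range (e.degree + 1))]
  · simp only [coeff_smul]
  · intro n hn
    rw [mem_range, not_lt] at hn
    exact coeff_of_lt_order ((le_order_smul_pow _ hf n).trans_lt' (by exact_mod_cast hn))

theorem mexp_zero : mexp 0 = 1 := by
  rw [mexp, tsum_eq_single 0 fun n hn => by rw [zero_pow hn, smul_zero]]
  simp

-- Read off from `exp (a X) * exp (b X) = exp ((a + b) X)` over the coefficient ring `R`.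
theorem sum_antidiagonal_smul_pow_mul (f g : R) (n : ℕ) :
    ∑ p ∈ antidiagonal n, ((p.1 ! : ℚ)⁻¹ • f ^ p.1) * ((p.2 ! : ℚ)⁻¹ • g ^ p.2) =
      (n ! : ℚ)⁻¹ • (f + g) ^ n := by
  have := congrArg (PowerSeries.coeff n) (PowerSeries.exp_mul_exp_eq_exp_add f g)
  simpa [PowerSeries.coeff_mul, PowerSeries.coeff_rescale, PowerSeries.coeff_exp,
    Algebra.smul_def, mul_comm, mul_left_comm, mul_assoc] using this

theorem mexp_add (hf : constantCoeff f = 0) (hg : constantCoeff g = 0) :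
    mexp (f + g) = mexp f * mexp g := by
  have hord (p : ℕ × ℕ) :
      ((p.1 + p.2 : ℕ) : ℕ∞) ≤ (((p.1 ! : ℚ)⁻¹ • f ^ p.1) * ((p.2 ! : ℚ)⁻¹ • g ^ p.2)).order := by
    rw [Nat.cast_add]
    exact (add_le_add (le_order_smul_pow _ hf _) (le_order_smul_pow _ hg _)).trans le_order_mul
  have hfg : Summable fun p : ℕ × ℕ => ((p.1 ! : ℚ)⁻¹ • f ^ p.1) * ((p.2 ! : ℚ)⁻¹ • g ^ p.2) :=
    summable_of_le_order (fun p => p.1 + p.2)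
      (fun N => ((Set.finite_le_nat N).prod (Set.finite_le_nat N)).subset fun p hp =>
        ⟨(Nat.le_add_right _ _).trans hp, (Nat.le_add_left _ _).trans hp⟩) hord
  have h := (summable_smul_pow (fun n => (n ! : ℚ)⁻¹) hf).tsum_mul_tsum_eq_tsum_sum_antidiagonal
    (summable_smul_pow (fun n => (n ! : ℚ)⁻¹) hg) hfg
  simp only [sum_antidiagonal_smul_pow_mul] at h
  exact h.symm

theorem mexp_sum {ι : Type*} (s : Finset ι) {F : ι → R} (h : ∀ i ∈ s, constantCoeff (F i) = 0) :
    mexp (∑ i ∈ s, F i) = ∏ i ∈ s, mexp (F i) := by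
  induction s using Finset.cons_induction with
  | empty => rw [sum_empty, prod_empty, mexp_zero]
  | cons a s ha ih =>
    have hs : ∀ i ∈ s, constantCoeff (F i) = 0 := fun i hi => h i (mem_cons_of_mem hi)
    rw [sum_cons, prod_cons, mexp_add (h a (mem_cons_self a s))
      (by rw [map_sum]; exact sum_eq_zero hs), ih hs]

theorem tendsto_mexp {α : Type*} {l : Filter α} {F : α → R} {G : R} (hF : Tendsto F l (𝓝 G))
    (hF0 : ∀ a, constantCoeff (F a) = 0) (hG0 : constantCoeff G = 0) :
    Tendsto (fun a => mexp (F a)) l (𝓝 (mexp G)) := by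
  refine tendsto_iff_coeff.2 fun e => ?_
  have hpow : ∀ᶠ a in l, ∀ n ∈ range (e.degree + 1), coeff e (F a ^ n) = coeff e (G ^ n) :=
    (eventually_all_finset _).2 fun n _ => tendsto_iff_coeff.1 (hF.pow n) e
  filter_upwards [hpow] with a ha
  rw [coeff_mexp (hF0 a), coeff_mexp hG0]
  exact sum_congr rfl fun n hn => by rw [ha n hn]

theorem hasProd_mexp {ι : Type*} {F : ι → R} {G : R} (hF : HasSum F G)
    (h0 : ∀ i, constantCoeff (F i) = 0) : HasProd (fun i => mexp (F i)) (mexp G) := by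
  have hsum0 (s : Finset ι) : constantCoeff (∑ i ∈ s, F i) = 0 := by
    rw [map_sum]
    exact sum_eq_zero fun i _ => h0 i
  have hG0 : constantCoeff G = 0 := by
    obtain ⟨s, hs⟩ := (tendsto_iff_coeff.1 hF 0).exists
    rw [← coeff_zero_eq_constantCoeff_apply, ← hs, coeff_zero_eq_constantCoeff_apply, hsum0]
  have := tendsto_mexp hF hsum0 hG0
  simp only [mexp_sum _ fun i _ => h0 i] at this
  exact this

end Exp

theorem mapDomain_mul_injective (k : ℕ+) :
    Function.Injective (Finsupp.mapDomain (k * ·) : (ℕ+ →₀ ℕ) → ℕ+ →₀ ℕ) :=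
  Finsupp.mapDomain_injective (mul_right_injective k)

theorem mapDomain_mul_mul (k l : ℕ+) (e : ℕ+ →₀ ℕ) :
    Finsupp.mapDomain ((k * l) * ·) e =
      Finsupp.mapDomain (k * ·) (Finsupp.mapDomain (l * ·) e) := by
  rw [← Finsupp.mapDomain_comp]
  congr 1
  funext m
  exact mul_assoc k l m

theorem coeff_psi_mapDomain (k : ℕ+) (f : R) (e : ℕ+ →₀ ℕ) :
    coeff (Finsupp.mapDomain (k * ·) e) (psi k f) = coeff e f := by
  have h : ∃ e', Finsupp.mapDomain (k * ·) e' = Finsupp.mapDomain (k * ·) e := ⟨e, rfl⟩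
  exact (dif_pos h).trans (congrArg (coeff · f) (mapDomain_mul_injective k h.choose_spec))

theorem coeff_psi_of_notMem {k : ℕ+} {e : ℕ+ →₀ ℕ}
    (he : e ∉ Set.range (Finsupp.mapDomain (k * ·))) (f : R) : coeff e (psi k f) = 0 :=
  dif_neg he

theorem exists_of_coeff_psi_ne_zero {k : ℕ+} {f : R} {e : ℕ+ →₀ ℕ} (h : coeff e (psi k f) ≠ 0) :
    ∃ e', Finsupp.mapDomain (k * ·) e' = e :=
  by_contra fun he => h (coeff_psi_of_notMem he f)

theorem psi_add (k : ℕ+) (f g : R) : psi k (f + g) = psi k f + psi k g := by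
  ext e
  by_cases he : e ∈ Set.range (Finsupp.mapDomain (k * ·))
  · obtain ⟨e, rfl⟩ := he
    simp only [map_add, coeff_psi_mapDomain]
  · simp only [map_add, coeff_psi_of_notMem he, add_zero]

theorem psi_smul (k : ℕ+) (c : ℚ) (f : R) : psi k (c • f) = c • psi k f := by
  ext e
  by_cases he : e ∈ Set.range (Finsupp.mapDomain (k * ·))
  · obtain ⟨e, rfl⟩ := he
    simp only [coeff_smul, coeff_psi_mapDomain]
  · simp only [coeff_smul, coeff_psi_of_notMem he, mul_zero]

theorem psi_one (k : ℕ+) : psi k 1 = 1 := by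
  ext e
  by_cases he : e ∈ Set.range (Finsupp.mapDomain (k * ·))
  · obtain ⟨e, rfl⟩ := he
    simp only [coeff_psi_mapDomain, coeff_one,
      (mapDomain_mul_injective k).eq_iff' Finsupp.mapDomain_zero]
  · rw [coeff_psi_of_notMem he, coeff_one, if_neg]
    rintro rfl
    exact he ⟨0, Finsupp.mapDomain_zero⟩

theorem psi_mul (k : ℕ+) (f g : R) : psi k (f * g) = psi k f * psi k g := by
  ext e
  rw [coeff_mul]
  by_cases he : e ∈ Set.range (Finsupp.mapDomain (k * ·))
  · obtain ⟨e, rfl⟩ := he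
    rw [coeff_psi_mapDomain, coeff_mul]
    refine sum_bij_ne_zero
      (fun p _ _ => (Finsupp.mapDomain (k * ·) p.1, Finsupp.mapDomain (k * ·) p.2))
      (fun p hp _ => ?_) (fun p _ _ q _ _ h => ?_) (fun q hq hne => ?_) (fun p _ _ => ?_)
    · rw [HasAntidiagonal.mem_antidiagonal] at hp ⊢
      rw [← Finsupp.mapDomain_add, hp]
    · simp only [Prod.mk.injEq, (mapDomain_mul_injective k).eq_iff] at h
      exact Prod.ext h.1 h.2
    · obtain ⟨q1, q2⟩ := q
      obtain ⟨a, rfl⟩ := exists_of_coeff_psi_ne_zero (left_ne_zero_of_mul hne)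
      obtain ⟨b, rfl⟩ := exists_of_coeff_psi_ne_zero (right_ne_zero_of_mul hne)
      rw [coeff_psi_mapDomain, coeff_psi_mapDomain] at hne
      rw [HasAntidiagonal.mem_antidiagonal, ← Finsupp.mapDomain_add] at hq
      exact ⟨(a, b), HasAntidiagonal.mem_antidiagonal.2 (mapDomain_mul_injective k hq), hne, rfl⟩
    · rw [coeff_psi_mapDomain, coeff_psi_mapDomain]
  · rw [coeff_psi_of_notMem he]
    refine (sum_eq_zero fun q hq => ?_).symm
    by_contra hne
    obtain ⟨a, ha⟩ := exists_of_coeff_psi_ne_zero (left_ne_zero_of_mul hne)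
    obtain ⟨b, hb⟩ := exists_of_coeff_psi_ne_zero (right_ne_zero_of_mul hne)
    exact he ⟨a + b, by rw [Finsupp.mapDomain_add, ha, hb, (HasAntidiagonal.mem_antidiagonal.1 hq)]⟩

theorem psi_psi (k l : ℕ+) (f : R) : psi k (psi l f) = psi (k * l) f := by
  ext e
  by_cases he : e ∈ Set.range (Finsupp.mapDomain ((k * l) * ·))
  · obtain ⟨e, rfl⟩ := he
    rw [coeff_psi_mapDomain, mapDomain_mul_mul, coeff_psi_mapDomain, coeff_psi_mapDomain]
  · rw [coeff_psi_of_notMem he]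
    by_contra h
    obtain ⟨a, rfl⟩ := exists_of_coeff_psi_ne_zero h
    rw [coeff_psi_mapDomain] at h
    obtain ⟨b, rfl⟩ := exists_of_coeff_psi_ne_zero h
    exact he ⟨b, mapDomain_mul_mul k l b⟩

theorem continuous_psi (k : ℕ+) : Continuous (psi k) :=
  continuous_iff_continuousAt.2 fun f => tendsto_iff_coeff.2 fun e => by
    by_cases he : e ∈ Set.range (Finsupp.mapDomain (k * ·))
    · obtain ⟨e, rfl⟩ := he
      simpa only [coeff_psi_mapDomain, id_eq] using tendsto_iff_coeff.1 tendsto_id e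
    · simp only [coeff_psi_of_notMem he, eventually_true]

def psiHom (k : ℕ+) : R →ₐ[ℚ] R :=
  AlgHom.ofLinearMap ⟨⟨psi k, psi_add k⟩, psi_smul k⟩ (psi_one k) (psi_mul k)

@[simp]
theorem coe_psiHom (k : ℕ+) : ⇑(psiHom k) = psi k := rfl

theorem hasSum_mlog1p {f : R} (hf : constantCoeff f = 0) :
    HasSum (fun n : ℕ => ((-1 : ℚ) ^ n / (n + 1)) • f ^ (n + 1)) (mlog1p f) :=
  (summable_of_le_order (· + 1)
    (fun N => (Set.finite_le_nat N).subset fun _ hn => Nat.le_of_succ_le hn)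
    fun n => le_order_smul_pow _ hf (n + 1)).hasSum

theorem psi_mlog1p (k : ℕ+) {f : R} (hf : constantCoeff f = 0) :
    psi k (mlog1p f) = mlog1p (psi k f) := by
  have h := ((hasSum_mlog1p hf).map (psiHom k) (continuous_psi k)).tsum_eq
  simp only [Function.comp_def, map_smul, map_pow] at h
  simp only [coe_psiHom] at h
  exact h.symm

/-- Series each of whose monomials involves some variable `X_m` with `n ≤ m`. -/
def tailIdeal (n : ℕ+) : Ideal R where
  carrier := {f | ∀ e : ℕ+ →₀ ℕ, (∀ m ∈ e.support, m < n) → coeff e f = 0}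
  add_mem' hf hg e he := by rw [map_add, hf e he, hg e he, add_zero]
  zero_mem' e _ := map_zero (coeff e)
  smul_mem' c f hf e he := by
    rw [smul_eq_mul, coeff_mul]
    refine sum_eq_zero fun p hp => ?_
    rw [hf p.2 fun m hm => he m ?_, mul_zero]
    rw [HasAntidiagonal.mem_antidiagonal] at hp
    rw [← hp, Finsupp.mem_support_iff, Finsupp.add_apply]
    exact ne_of_gt (Nat.lt_add_left _ (Nat.pos_of_ne_zero (Finsupp.mem_support_iff.1 hm)))

section TailIdeal

variable {n : ℕ+} {f : R}

theorem constantCoeff_eq_zero_of_mem_tailIdeal (hf : f ∈ tailIdeal n) : constantCoeff f = 0 :=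
  hf 0 fun _ hm => absurd hm (Finsupp.notMem_support_iff.2 rfl)

theorem psi_mem_tailIdeal (n : ℕ+) (hf : constantCoeff f = 0) : psi n f ∈ tailIdeal n := by
  intro e he
  by_contra h
  obtain ⟨e, rfl⟩ := exists_of_coeff_psi_ne_zero h
  rw [coeff_psi_mapDomain] at h
  obtain ⟨m, hm⟩ : e.support.Nonempty := by
    rw [Finsupp.support_nonempty_iff]
    rintro rfl
    exact h (by rwa [coeff_zero_eq_constantCoeff_apply])
  have hnm : n * m ∈ (Finsupp.mapDomain (n * ·) e).support := by
    rwa [Finsupp.mem_support_iff, Finsupp.mapDomain_apply (mul_right_injective n),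
      ← Finsupp.mem_support_iff]
  exact (he _ hnm).not_ge (PNat.le_of_dvd (dvd_mul_right n m))

theorem tsum_mem_tailIdeal {ι : Type*} {F : ι → R} (hF : Summable F)
    (h : ∀ i, F i ∈ tailIdeal n) : ∑' i, F i ∈ tailIdeal n :=
  fun e he => (coeff_tsum hF (s := ∅) fun i _ => h i e he).trans sum_empty

theorem mlog1p_mem_tailIdeal (hf : f ∈ tailIdeal n) : mlog1p f ∈ tailIdeal n :=
  tsum_mem_tailIdeal (hasSum_mlog1p (constantCoeff_eq_zero_of_mem_tailIdeal hf)).summable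
    fun k => by
      rw [pow_succ]
      exact Submodule.smul_of_tower_mem _ _ (Ideal.mul_mem_left _ _ hf)

theorem summable_of_mem_tailIdeal {ι : Type*} {F : ι → R} (w : ι → ℕ+)
    (hw : ∀ N, {i | w i ≤ N}.Finite) (hF : ∀ i, F i ∈ tailIdeal (w i)) : Summable F :=
  summable_of_finite_coeff fun e =>
    (e.support.finite_toSet.biUnion fun m _ => hw m).subset fun i hi => by
      by_contra h
      simp only [Set.mem_iUnion, Set.mem_ofPred_eq, not_exists, not_le] at h
      exact hi (hF i e h)

end TailIdeal

theorem mlog1p_psi_mem_tailIdeal {y : R} (hy : constantCoeff y = 0) (n : ℕ+) :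
    mlog1p (psi n y) ∈ tailIdeal n :=
  mlog1p_mem_tailIdeal (psi_mem_tailIdeal n hy)

theorem summable_logFam {y : R} (hy : constantCoeff y = 0) : Summable (logFam y) :=
  summable_of_mem_tailIdeal id Set.finite_Iic fun l =>
    Submodule.smul_of_tower_mem _ _ (mlog1p_psi_mem_tailIdeal hy l)

def doubleFam (x y : R) (p : ℕ+ × ℕ+) : R :=
  ((μ p.2 : ℚ) / ((p.1 * p.2 : ℕ+) : ℚ)) • (psi p.1 x * mlog1p (psi (p.1 * p.2) y))

theorem summable_doubleFam {y : R} (hy : constantCoeff y = 0) (x : R) :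
    Summable (doubleFam x y) :=
  summable_of_mem_tailIdeal (fun p => p.1 * p.2)
    (fun N => ((Set.finite_Iic N).prod (Set.finite_Iic N)).subset fun _ hp =>
      ⟨(PNat.le_of_dvd (dvd_mul_right _ _)).trans hp, (PNat.le_of_dvd (dvd_mul_left _ _)).trans hp⟩)
    fun _ => Submodule.smul_of_tower_mem _ _
      (Ideal.mul_mem_left _ _ (mlog1p_psi_mem_tailIdeal hy _))

theorem hasSum_doubleFam_fst {y : R} (hy : constantCoeff y = 0) (x : R) (k : ℕ+) :
    HasSum (fun l => doubleFam x y (k, l)) (expFam x y k) := by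
  have h := (((summable_logFam hy).hasSum.mul_left x).map (psiHom k) (continuous_psi k)).const_smul
    ((k : ℚ))⁻¹
  convert h using 1
  · funext l
    rw [Function.comp_apply, coe_psiHom, logFam, mul_smul_comm, psi_smul, psi_mul,
      psi_mlog1p k (constantCoeff_eq_zero_of_mem_tailIdeal (psi_mem_tailIdeal l hy)), psi_psi,
      smul_smul, doubleFam]
    congr 1
    push_cast
    ring
  · rfl

def divisorsSigmaEquiv : (Σ n : ℕ+, (n : ℕ).divisors) ≃ ℕ+ × ℕ+ where
  toFun q := (⟨q.2, Nat.pos_of_mem_divisors q.2.2⟩,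
    ⟨q.1 / q.2, Nat.div_pos (Nat.divisor_le q.2.2) (Nat.pos_of_mem_divisors q.2.2)⟩)
  invFun p := ⟨p.1 * p.2, p.1, Nat.mem_divisors.2 ⟨by simp, by simp⟩⟩
  left_inv := by
    rintro ⟨n, d, hd⟩
    refine Sigma.subtype_ext (PNat.eq ?_) rfl
    exact Nat.mul_div_cancel' (Nat.dvd_of_mem_divisors hd)
  right_inv p := Prod.ext rfl (PNat.eq (Nat.mul_div_cancel_left _ p.1.pos))

theorem divisorsSigmaEquiv_fst_mul_snd (q : Σ n : ℕ+, (n : ℕ).divisors) :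
    (divisorsSigmaEquiv q).1 * (divisorsSigmaEquiv q).2 = q.1 :=
  PNat.eq (Nat.mul_div_cancel' (Nat.dvd_of_mem_divisors q.2.2))

def logProdFam (x y : R) (n : ℕ+) : R :=
  (((n : ℚ))⁻¹ •
      ∑ d ∈ (n : ℕ).divisors.attach,
        ((ArithmeticFunction.moebius ((n : ℕ) / (d : ℕ)) : ℤ) : ℚ) •
          psi ⟨(d : ℕ), Nat.pos_of_mem_divisors d.2⟩ x) *
    mlog1p (psi n y)

theorem logProdFam_mem_tailIdeal {y : R} (hy : constantCoeff y = 0) (x : R) (n : ℕ+) :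
    logProdFam x y n ∈ tailIdeal n :=
  Ideal.mul_mem_left _ _ (mlog1p_psi_mem_tailIdeal hy n)

theorem logProdFam_eq_sum (x y : R) (n : ℕ+) :
    logProdFam x y n = ∑ d : (n : ℕ).divisors, doubleFam x y (divisorsSigmaEquiv ⟨n, d⟩) := by
  simp only [doubleFam, divisorsSigmaEquiv_fst_mul_snd, logProdFam, smul_sum, sum_mul,
    smul_mul_assoc, smul_smul, univ_eq_attach]
  refine sum_congr rfl fun d _ => ?_
  rw [div_eq_inv_mul]
  rfl

theorem hasSum_logProdFam {y : R} (hy : constantCoeff y = 0) (x : R) :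
    HasSum (logProdFam x y) (∑' p, doubleFam x y p) := by
  refine (divisorsSigmaEquiv.hasSum_iff.2 (summable_doubleFam hy x).hasSum).sigma fun n => ?_
  rw [logProdFam_eq_sum]
  exact hasSum_fintype _

/-- The plethystic identity
`Exp(x·Log(1+y)) = ∏_{n≥1} (1+ψ_n(y))^{(1/n)·Σ_{d∣n} μ(n/d)·ψ_d(x)}`. -/
theorem statement (x y : R) (hy : MvPowerSeries.constantCoeff y = 0) :
    Summable (logFam y) ∧
    Summable (expFam x y) ∧
    Multipliable (prodFam x y) ∧
    mexp (∑' k : ℕ+, expFam x y k) = ∏' n : ℕ+, prodFam x y n := by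
  have hexp : HasSum (expFam x y) (∑' p, doubleFam x y p) :=
    (summable_doubleFam hy x).hasSum.prod_fiberwise (hasSum_doubleFam_fst hy x)
  have hprod : HasProd (prodFam x y) (mexp (∑' k, expFam x y k)) := by
    show HasProd (fun n => mexp (logProdFam x y n)) _
    rw [hexp.tsum_eq]
    exact hasProd_mexp (hasSum_logProdFam hy x) fun n =>
      constantCoeff_eq_zero_of_mem_tailIdeal (logProdFam_mem_tailIdeal hy x n)
  exact ⟨summable_logFam hy, hexp.summable, hprod.multipliable, hprod.tprod_eq.symm⟩

end Stmt1
end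
end

section
/- Let q be an odd prime power, r ≥ 1, n ≥ 1 an odd integer, and λ = (λ₁,…,λ_r) ∈ ℕ^r with |λ| = λ₁+⋯+λ_r odd. Then Σ_{d ∈ 𝒫_n} N_λ(d) = 0. -/
/-!
Let `q` be an odd prime power and `F = F_q`.  With `χ_d`, `N_λ(d)`, `𝒫_n` as in the
context:

Statement: if `n ≥ 1` is odd and `|λ| = λ₁+⋯+λ_r` is odd, then
`Σ_{d ∈ 𝒫_n} N_λ(d) = 0`.
-/

noncomputable section
open scoped Classical
open Polynomial UniqueFactorizationMonoid

namespace Stmt8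

variable (F : Type) [Field F] [Fintype F]

lemma finite_natDegree_le (n : ℕ) : {m : F[X] | m.natDegree ≤ n}.Finite := by
  refine Set.Finite.of_finite_image (f := fun m : F[X] => fun k : Fin (n + 1) => m.coeff k)
    (Set.toFinite _) ?_
  intro a ha b hb h
  ext k
  by_cases hk : k ≤ n
  · simpa using congrFun h ⟨k, Nat.lt_succ_of_le hk⟩
  · rw [Polynomial.coeff_eq_zero_of_natDegree_lt (lt_of_le_of_lt ha (by omega)),
        Polynomial.coeff_eq_zero_of_natDegree_lt (lt_of_le_of_lt hb (by omega))]

/-- Monic polynomials of degree `n`. -/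
abbrev MD (n : ℕ) : Type := {m : F[X] // m.Monic ∧ m.natDegree = n}

instance (n : ℕ) : Finite (MD F n) :=
  Set.Finite.to_subtype ((finite_natDegree_le F n).subset (fun _ hm => le_of_eq hm.2))

noncomputable instance (n : ℕ) : Fintype (MD F n) := Fintype.ofFinite _

/-- Monic squarefree polynomials of degree `n` (the set `𝒫_n`). -/
abbrev SF (n : ℕ) : Type := {d : F[X] // d.Monic ∧ Squarefree d ∧ d.natDegree = n}

instance (n : ℕ) : Finite (SF F n) :=
  Set.Finite.to_subtype ((finite_natDegree_le F n).subset (fun _ hm => le_of_eq hm.2.2))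

noncomputable instance (n : ℕ) : Fintype (SF F n) := Fintype.ofFinite _

/-- The quadratic residue symbol `(a/p)` for an irreducible modulus `p`:
`0` if `p ∣ a`, `1` if `a` is a nonzero square mod `p`, and `−1` otherwise. -/
def legP (a p : F[X]) : ℤ :=
  if p ∣ a then 0 else if ∃ b : F[X], p ∣ (b ^ 2 - a) then 1 else -1

/-- `χ_a(m) = (a/m)`: the product of `(a/pᵢ)` over the factorization `m = p₁⋯p_k` of `m`
into monic irreducibles (for monic `m`; `(a/1) = 1`). -/
def chi (a m : F[X]) : ℤ := ((normalizedFactors m).map (legP F a)).prod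

/-- Tuples `(m₁,…,m_r)` of monic polynomials with `deg m_i = λ_i`. -/
abbrev Tup {r : ℕ} (lam : Fin r → ℕ) : Type := (i : Fin r) → MD F (lam i)

/-- `N_λ(d) = Σ_{(m₁,…,m_r)} ∏_i χ_d(m_i)`. -/
def Nlam {r : ℕ} (lam : Fin r → ℕ) (d : F[X]) : ℤ :=
  ∑ t : Tup F lam, ∏ i, chi F d (t i : F[X])

end Stmt8

/-!
Fix a nonsquare `s ∈ 𝔽_q` and write `m̃ := s^{deg m} m(x/s)` (`Polynomial.scaleRoots m s`), a
degree-preserving multiplicative bijection of monic polynomials that preserves irreducibility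
and squarefreeness. Up to the automorphism `x ↦ x/s` of `𝔽_q[x]` and unit factors,
`(d̃/p̃) = (s^{deg d} d/p) = (s^{deg d}/p) (d/p)`. For odd `deg d` the constant `s^{deg d}` is a
nonsquare of `𝔽_q`, and such a constant is a square in `𝔽_q[x]/(p) ≅ 𝔽_{q^{deg p}}` exactly
when `deg p` is even. Hence `χ_{d̃}(m̃) = (-1)^{deg m} χ_d(m)` and
`N_λ(d̃) = (-1)^{|λ|} N_λ(d) = -N_λ(d)`; as `d ↦ d̃` permutes `𝒫_n`, the sum equals its negative.
-/

theorem Nat.odd_pow_succ_div_two {Q : ℕ} (hQ : Odd Q) (f : ℕ) :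
    Q ^ (f + 1) / 2 = Q ^ f / 2 * Q + Q / 2 := by
  obtain ⟨b, hb⟩ := hQ.pow (n := f)
  obtain ⟨a, rfl⟩ := hQ
  have hdiv : (2 * b + 1) / 2 = b := by omega
  rw [pow_succ, hb, hdiv, show (2 * b + 1) * (2 * a + 1) = 2 * (b * (2 * a + 1) + a) + 1 by ring]
  omega

namespace FiniteField

variable {K : Type*} [Field K] [Fintype K]

theorem pow_card_pow_div_two_of_not_isSquare (hK : ringChar K ≠ 2) {c : K} (hc : ¬IsSquare c)
    (f : ℕ) : c ^ (Fintype.card K ^ f / 2) = (-1) ^ f := by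
  have hc0 : c ≠ 0 := by rintro rfl; exact hc IsSquare.zero
  have hhalf : c ^ (Fintype.card K / 2) = -1 :=
    (pow_dichotomy hK hc0).resolve_left fun h ↦ hc ((isSquare_iff hK hc0).2 h)
  induction f with
  | zero => simp
  | succ f ih =>
    rw [Nat.odd_pow_succ_div_two (Nat.odd_iff.2 (odd_card_of_char_ne_two hK)), pow_add,
      pow_mul, pow_card, ih, hhalf, pow_succ]

theorem isSquare_algebraMap_iff_even_finrank {L : Type*} [Field L] [Fintype L] [Algebra K L]
    (hK : ringChar K ≠ 2) {c : K} (hc : ¬IsSquare c) :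
    IsSquare (algebraMap K L c) ↔ Even (Module.finrank K L) := by
  have hc0 : c ≠ 0 := by rintro rfl; exact hc IsSquare.zero
  have : CharP L (ringChar K) :=
    charP_of_injective_algebraMap (algebraMap K L).injective (ringChar K)
  have hL : ringChar L ≠ 2 := by rwa [ringChar.eq L (ringChar K)]
  rw [isSquare_iff hL (by simpa using hc0), ← map_pow,
    Module.card_eq_pow_finrank (K := K) (V := L), pow_card_pow_div_two_of_not_isSquare hK hc,
    map_pow, map_neg, map_one, neg_one_pow_eq_one_iff_even (Ring.neg_one_ne_one_of_char_ne_two hL)]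

theorem not_isSquare_pow_of_odd {c : K} (hc : ¬IsSquare c) {n : ℕ} (hn : Odd n) :
    ¬IsSquare (c ^ n) := by
  rw [← quadraticChar_neg_one_iff_not_isSquare] at hc ⊢
  rw [map_pow, hc, hn.neg_one_pow]

end FiniteField

theorem MulEquiv.squarefree_map_iff {M N : Type*} [Monoid M] [Monoid N] (f : M ≃* N) {x : M} :
    Squarefree (f x) ↔ Squarefree x := by
  refine ⟨fun h y hy ↦ ?_, fun h y hy ↦ ?_⟩
  · exact (isUnit_map_iff f y).1 (h _ (by simpa using map_dvd f hy))
  · have := h (f.symm y) (by simpa using map_dvd f.symm hy)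
    simpa using this.map f

theorem UniqueFactorizationMonoid.normalizedFactors_map_mulEquiv {α : Type*}
    [CommMonoidWithZero α] [NormalizationMonoid α] [UniqueFactorizationMonoid α] (f : α ≃* α)
    (hf : ∀ x, normalize (f x) = f (normalize x)) (a : α) :
    normalizedFactors (f a) = (normalizedFactors a).map f := by
  rcases eq_or_ne a 0 with rfl | ha
  · simp
  have hprod : Associated (f (normalizedFactors a).prod) (f a) :=
    (prod_normalizedFactors ha).map f
  rw [← hprod.normalizedFactors_eq, map_multiset_prod,
    normalizedFactors_prod_eq _ fun p hp ↦ ?_, Multiset.map_map]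
  · refine Multiset.map_congr rfl fun p hp ↦ ?_
    simp [hf, normalize_normalized_factor p hp]
  · obtain ⟨q, hq, rfl⟩ := Multiset.mem_map.1 hp
    exact (MulEquiv.irreducible_iff f).2 (irreducible_of_normalized_factor q hq)

namespace Polynomial

variable {F : Type*} [Field F]

def scaleRootsMulEquiv (s : Fˣ) : F[X] ≃* F[X] where
  toFun p := p.scaleRoots s
  invFun p := p.scaleRoots ↑s⁻¹
  left_inv p := by simp [← scaleRoots_mul]
  right_inv p := by simp [← scaleRoots_mul]
  map_mul' p q := mul_scaleRoots_of_noZeroDivisors p q s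

theorem normalize_scaleRoots (s : Fˣ) (p : F[X]) :
    normalize (p.scaleRoots s) = (normalize p).scaleRoots s := by
  simp only [normalize_apply, coe_normUnit, leadingCoeff_scaleRoots,
    mul_scaleRoots_of_noZeroDivisors, scaleRoots_C]

theorem sum_natDegree_normalizedFactors (m : F[X]) :
    ((normalizedFactors m).map natDegree).sum = m.natDegree := by
  conv_rhs => rw [← leadingCoeff_mul_prod_normalizedFactors m]
  rcases eq_or_ne m 0 with rfl | hm
  · simp
  rw [natDegree_C_mul (leadingCoeff_ne_zero.2 hm),
    natDegree_multiset_prod _ (zero_notMem_normalizedFactors m)]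

end Polynomial

namespace Stmt8

variable {F : Type} [Field F]

theorem legP_eq_quadraticChar {p : F[X]} [Fact (Irreducible p)] [Fintype (AdjoinRoot p)]
    (a : F[X]) : legP F a p = quadraticChar (AdjoinRoot p) (AdjoinRoot.mk p a) := by
  have hsq : (∃ b : F[X], p ∣ b ^ 2 - a) ↔ IsSquare (AdjoinRoot.mk p a) := by
    simp only [← AdjoinRoot.mk_eq_zero, map_sub, sq, map_mul, sub_eq_zero,
      AdjoinRoot.mk_surjective.exists, IsSquare]
    exact exists_congr fun _ ↦ eq_comm
  by_cases h0 : p ∣ a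
  · rw [legP, if_pos h0, AdjoinRoot.mk_eq_zero.2 h0, quadraticChar_zero]
  have h0' : AdjoinRoot.mk p a ≠ 0 := by rwa [Ne, AdjoinRoot.mk_eq_zero]
  rw [legP, if_neg h0, hsq]
  split_ifs with hs
  · exact ((quadraticChar_one_iff_isSquare h0').2 hs).symm
  · exact (quadraticChar_neg_one_iff_not_isSquare.2 hs).symm

theorem legP_of_associated {p q : F[X]} (h : Associated p q) (a : F[X]) :
    legP F a p = legP F a q := by
  simp only [legP, h.dvd_iff_dvd_left]

theorem legP_map_ringEquiv {E : Type*} [EquivLike E F[X] F[X]] [RingEquivClass E F[X] F[X]]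
    (e : E) (a p : F[X]) : legP F (e a) (e p) = legP F a p := by
  have hsq : (∃ b, e p ∣ b ^ 2 - e a) ↔ ∃ b, p ∣ b ^ 2 - a := by
    refine (EquivLike.surjective e).exists.trans (exists_congr fun b ↦ ?_)
    rw [← map_pow, ← map_sub, map_dvd_iff]
  simp only [legP, map_dvd_iff, hsq]

theorem legP_C_mul_of_not_isSquare [Fintype F] (hF : ringChar F ≠ 2) {p : F[X]}
    (hp : Irreducible p) {c : F} (hc : ¬IsSquare c) (a : F[X]) :
    legP F (C c * a) p = (-1) ^ p.natDegree * legP F a p := by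
  have : Fact (Irreducible p) := ⟨hp⟩
  let pb := AdjoinRoot.powerBasis hp.ne_zero
  have : Module.Finite F (AdjoinRoot p) := pb.finite
  have : Finite (AdjoinRoot p) := Module.finite_of_finite F
  let : Fintype (AdjoinRoot p) := Fintype.ofFinite _
  have hdeg : Module.finrank F (AdjoinRoot p) = p.natDegree := by
    rw [pb.finrank, AdjoinRoot.powerBasis_dim]
  have hc0 : algebraMap F (AdjoinRoot p) c ≠ 0 := by
    simpa using fun h : c = 0 ↦ hc (h ▸ IsSquare.zero)
  have hsq := FiniteField.isSquare_algebraMap_iff_even_finrank (L := AdjoinRoot p) hF hc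
  rw [legP_eq_quadraticChar, legP_eq_quadraticChar, map_mul, map_mul, AdjoinRoot.mk_C,
    ← AdjoinRoot.algebraMap_eq]
  congr 1
  rcases Nat.even_or_odd p.natDegree with h | h
  · rw [h.neg_one_pow, quadraticChar_one_iff_isSquare hc0, hsq, hdeg]
    exact h
  · rw [h.neg_one_pow, quadraticChar_neg_one_iff_not_isSquare, hsq, hdeg, Nat.not_even_iff_odd]
    exact h

theorem legP_scaleRoots [Fintype F] (hF : ringChar F ≠ 2) {s : Fˣ} {d : F[X]}
    (hd : ¬IsSquare ((s : F) ^ d.natDegree)) {p : F[X]} (hp : Irreducible p) :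
    legP F (d.scaleRoots s) (p.scaleRoots s) = (-1) ^ p.natDegree * legP F d p := by
  let τ : F[X] ≃ₐ[F] F[X] := algEquivOfCompEqX (C ((s⁻¹ : Fˣ) : F) * X) (C (s : F) * X)
    (by simp [← C_mul, ← mul_assoc]) (by simp [← C_mul, ← mul_assoc])
  have hτ (q : F[X]) : q.scaleRoots s = C ((s : F) ^ q.natDegree) * τ q := by
    ext i
    simp only [coeff_scaleRoots, coeff_C_mul, τ, algEquivOfCompEqX_apply, ← comp_eq_aeval,
      comp_C_mul_X_coeff]
    rcases le_or_gt i q.natDegree with hi | hi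
    · rw [pow_sub₀ _ s.ne_zero hi, Units.val_inv_eq_inv_val, inv_pow]
      ring
    · simp [coeff_eq_zero_of_natDegree_lt hi]
  have hC (c : F) (q : F[X]) : C c * τ q = τ (C c * q) := by
    rw [map_mul, ← algebraMap_eq, τ.commutes]
  rw [hτ d, hτ p, legP_of_associated (associated_unit_mul_left (τ p) _ (isUnit_C.2 (by simp))),
    hC, legP_map_ringEquiv, legP_C_mul_of_not_isSquare hF hp hd]

theorem chi_scaleRoots [Fintype F] (hF : ringChar F ≠ 2) {s : Fˣ} {d : F[X]}
    (hd : ¬IsSquare ((s : F) ^ d.natDegree)) (m : F[X]) :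
    chi F (d.scaleRoots s) (m.scaleRoots s) = (-1) ^ m.natDegree * chi F d m := by
  have hfac : normalizedFactors (m.scaleRoots s) = (normalizedFactors m).map (·.scaleRoots s) :=
    normalizedFactors_map_mulEquiv (scaleRootsMulEquiv s) (normalize_scaleRoots s) m
  have hleg : (normalizedFactors m).map (legP F (d.scaleRoots s) ∘ (·.scaleRoots s)) =
      (normalizedFactors m).map fun p ↦ (-1) ^ p.natDegree * legP F d p :=
    Multiset.map_congr rfl fun p hp ↦
      legP_scaleRoots hF hd (irreducible_of_normalized_factor p hp)
  rw [chi, chi, hfac, Multiset.map_map, hleg, Multiset.prod_map_mul,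
    ← sum_natDegree_normalizedFactors m]
  congr 1
  induction normalizedFactors m using Multiset.induction_on with
  | empty => simp
  | cons p t ih => simp [ih, pow_add]

def scaleRootsMD (s : Fˣ) (k : ℕ) : MD F k ≃ MD F k :=
  (scaleRootsMulEquiv s).toEquiv.subtypeEquiv fun p ↦ by
    simp [scaleRootsMulEquiv, monic_scaleRoots_iff, natDegree_scaleRoots]

def scaleRootsSF (s : Fˣ) (k : ℕ) : SF F k ≃ SF F k :=
  (scaleRootsMulEquiv s).toEquiv.subtypeEquiv fun p ↦ by
    simp only [MulEquiv.toEquiv_eq_coe, EquivLike.coe_coe, MulEquiv.squarefree_map_iff]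
    simp [scaleRootsMulEquiv, monic_scaleRoots_iff, natDegree_scaleRoots]

theorem Nlam_scaleRoots [Fintype F] (hF : ringChar F ≠ 2) {s : Fˣ} {d : F[X]}
    (hd : ¬IsSquare ((s : F) ^ d.natDegree)) {r : ℕ} (lam : Fin r → ℕ) :
    Nlam F lam (d.scaleRoots s) = (-1) ^ (∑ i, lam i) * Nlam F lam d := by
  rw [Nlam, Nlam, Finset.mul_sum,
    ← (Equiv.piCongrRight fun i ↦ scaleRootsMD s (lam i)).sum_comp]
  refine Finset.sum_congr rfl fun t _ ↦ ?_
  have hchi (i : Fin r) : chi F (d.scaleRoots s) ((t i : F[X]).scaleRoots s) =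
      (-1) ^ lam i * chi F d (t i) := by
    rw [chi_scaleRoots hF hd, (t i).2.2]
  simp only [Equiv.piCongrRight_apply]
  exact (Finset.prod_congr rfl fun i _ ↦ hchi i).trans
    (by rw [Finset.prod_mul_distrib, Finset.prod_pow_eq_pow_sum])

variable (F) [Fintype F]

theorem statement (q : ℕ) (hq : Fintype.card F = q) (hodd : Odd q)
    (r : ℕ) (lam : Fin r → ℕ) (hlam : Odd (∑ i, lam i))
    (n : ℕ) (hnodd : Odd n) :
    ∑ d : SF F n, Nlam F lam (d : F[X]) = 0 := by
  have hF : ringChar F ≠ 2 := by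
    rw [Ne, FiniteField.even_card_iff_char_two, hq, ← Nat.even_iff, Nat.not_even_iff_odd]
    exact hodd
  obtain ⟨s, hs⟩ := quadraticChar_exists_neg_one' hF
  have hs' : ¬IsSquare (s : F) := quadraticChar_neg_one_iff_not_isSquare.1 hs
  have hflip (d : SF F n) : Nlam F lam ((d : F[X]).scaleRoots s) = -Nlam F lam d := by
    rw [Nlam_scaleRoots hF (FiniteField.not_isSquare_pow_of_odd hs' (by rwa [d.2.2.2])),
      hlam.neg_one_pow, neg_one_mul]
  have hsum : ∑ d : SF F n, Nlam F lam ((d : F[X]).scaleRoots s) = ∑ d : SF F n, Nlam F lam d :=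
    (scaleRootsSF s n).sum_comp fun d ↦ Nlam F lam d
  rw [Finset.sum_congr rfl fun d _ ↦ hflip d, Finset.sum_neg_distrib] at hsum
  omega

end Stmt8
end
end

section
/- Let r ≥ 1 and g ≥ 0 be integers and λ a partition with λ₁ ≤ r, with conjugate λ' = (λ'₁ ≥ … ≥ λ'_r ≥ 0) padded with zeros to r parts. Then in the rational function field ℚ(t₁,…,t_r) one has the identity det( t_i^{g−λ'_{r+1−j}+r+1−j} − t_i^{−(g−λ'_{r+1−j}+r+1−j)} )_{1≤i,j≤r} / det( t_i^{r+1−j} − t_i^{−(r+1−j)} )_{1≤i,j≤r} = Σ_{ε ∈ {±1}^r} s_{λ'}(t₁^{ε₁},…,t_r^{ε_r}) / ( ∏_{i=1}^r t_i^{ε_i·g} · ∏_{1≤i≤j≤r} (1 − t_i^{ε_i} t_j^{ε_j}) ), the sum being over all tuples ε = (ε₁,…,ε_r) ∈ {−1,1}^r. (The left-hand side is the symplectic Schur function s⟨λ†(g)⟩(t₁^{±1},…,t_r^{±1}) with λ† = (g−λ'_r ≥ … ≥ g−λ'₁).) -/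
/-!
Let `λ` be a partition with `λ₁ ≤ r`, with conjugate `λ' = (λ'₁ ≥ … ≥ λ'_r ≥ 0)` padded
with zeros to `r` parts (encoded by the antitone function `μ : Fin r → ℕ`, 0-based, so
`μ 0 = λ'₁`).  In the rational function field `ℚ(t₁,…,t_r)`:

`det(t_i^{g−λ'_{r+1−j}+r+1−j} − t_i^{−(g−λ'_{r+1−j}+r+1−j)}) / det(t_i^{r+1−j} − t_i^{−(r+1−j)})
  = Σ_{ε ∈ {±1}^r} s_{λ'}(t₁^{ε₁},…,t_r^{ε_r}) /
      (∏_i t_i^{ε_i g} · ∏_{1≤i≤j≤r} (1 − t_i^{ε_i} t_j^{ε_j}))`,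
where `s_ν(u) = det(u_i^{ν_j+r−j}) / det(u_i^{r−j})` is the Schur polynomial
(bialternant formula).
-/

noncomputable section

namespace Stmt9

/-- The rational function field `ℚ(t₁,…,t_r)`. -/
abbrev K (r : ℕ) : Type := FractionRing (MvPolynomial (Fin r) ℚ)

/-- The variable `t_i` as an element of `ℚ(t₁,…,t_r)`. -/
def t (r : ℕ) (i : Fin r) : K r :=
  algebraMap (MvPolynomial (Fin r) ℚ) (K r) (MvPolynomial.X i)

/-- The Schur polynomial `s_ν(u₁,…,u_r) = det(u_i^{ν_j+r−j}) / det(u_i^{r−j})`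
(bialternant formula); the column index `j` below is 0-based, so `r − j` (1-based)
becomes `r − 1 − j` (0-based). -/
def schur (r : ℕ) (ν : Fin r → ℕ) (u : Fin r → K r) : K r :=
  Matrix.det (Matrix.of fun i j : Fin r => u i ^ (ν j + (r - 1 - (j : ℕ)))) /
    Matrix.det (Matrix.of fun i j : Fin r => u i ^ (r - 1 - (j : ℕ)))

/-- The sign `ε_i ∈ {±1}` encoded by a boolean. -/
def sgn (ε : Bool) : ℤ := if ε then 1 else -1

/-!
Reversing the columns of both determinants, the denominator becomes the type `C` Weyl
denominator: its entries are `(t - t⁻¹) S_j(t + t⁻¹)` with `S_j` the monic Chebyshev polynomials,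
so it equals `∏ (tᵢ - tᵢ⁻¹)` times the Vandermonde determinant in the `tᵢ + tᵢ⁻¹`. The numerator
is expanded multilinearly in its rows over the choices `wᵢ = tᵢ^{±1}`; each term is, up to sign
and `∏ wᵢ^{-(g+1)}`, the bialternant `s_λ'(w)` times the Vandermonde determinant in the `wᵢ⁻¹`.
Finally `(wⱼ⁻¹ - wᵢ⁻¹)(1 - wᵢwⱼ) = (wⱼ + wⱼ⁻¹) - (wᵢ + wᵢ⁻¹)` turns that Vandermonde determinant
times `∏_{i≤j} (1 - wᵢwⱼ)` back into the Weyl denominator.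
-/

open Matrix (of of_apply det vandermonde detRowAlternating)
open Polynomial Finset

section Chebyshev

open Polynomial.Chebyshev

theorem monic_S_natCast_and_natDegree (R : Type*) [CommRing R] [Nontrivial R] (n : ℕ) :
    (S R n).Monic ∧ (S R n).natDegree = n := by
  induction n using Nat.twoStepInduction with
  | zero => simp
  | one => simp
  | more n _ ih =>
    push_cast at ih ⊢
    have hX : (X * S R (n + 1)).Monic := monic_X.mul ih.1
    have hdeg : (X * S R (n + 1)).natDegree = n + 2 := by
      rw [monic_X.natDegree_mul ih.1, natDegree_X, ih.2]; ring
    have hlt : (S R n).natDegree < (X * S R (n + 1)).natDegree := by omega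
    rw [S_add_two]
    exact ⟨hX.sub_of_left (degree_lt_degree hlt),
      by rw [natDegree_sub_eq_left_of_natDegree_lt hlt, hdeg]⟩

theorem sub_inv_mul_eval_S_add_inv {F : Type*} [Field F] {x : F} (hx : x ≠ 0) (n : ℕ) :
    (x - x⁻¹) * (S F n).eval (x + x⁻¹) = x ^ (n + 1) - x⁻¹ ^ (n + 1) := by
  induction n using Nat.twoStepInduction with
  | zero => simp
  | one =>
    simp only [Nat.cast_one, S_one, eval_X, inv_pow]
    field_simp
    ring
  | more n ih₀ ih₁ =>
    push_cast at ih₁ ⊢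
    rw [S_add_two, eval_sub, eval_mul, eval_X, mul_sub, mul_left_comm, ih₁, ih₀]
    linear_combination (x ^ (n + 1) - x⁻¹ ^ (n + 1)) * mul_inv_cancel₀ hx

end Chebyshev

section Field

variable {F : Type*} [Field F]

theorem inv_sub_inv_mul_one_sub_mul {a b : F} (ha : a ≠ 0) (hb : b ≠ 0) :
    (b⁻¹ - a⁻¹) * (1 - a * b) = (b + b⁻¹) - (a + a⁻¹) := by
  field_simp
  ring

theorem sub_inv_ne_zero {a : F} (ha : a ≠ 0) (h : a * a ≠ 1) : a - a⁻¹ ≠ 0 := by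
  intro h'
  exact h (by rw [← mul_inv_cancel₀ ha, ← sub_eq_zero, ← mul_sub, h', mul_zero])

theorem injective_add_inv {ι : Type*} {x : ι → F} (hx : Function.Injective x)
    (h0 : ∀ i, x i ≠ 0) (h1 : ∀ i j, x i * x j ≠ 1) :
    Function.Injective fun i => x i + (x i)⁻¹ := by
  intro i j hij
  have h := (inv_sub_inv_mul_one_sub_mul (h0 i) (h0 j)).trans (sub_eq_zero.2 hij.symm)
  rcases mul_eq_zero.1 h with h | h
  · exact hx (inv_injective (sub_eq_zero.1 h)).symm
  · exact absurd (sub_eq_zero.1 h).symm (h1 i j)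

theorem neg_sgn_mul_inv_zpow_sgn_sub (x : F) (b : Bool) :
    -(sgn b : F) * ((x ^ sgn b)⁻¹ - x ^ sgn b) = x - x⁻¹ := by
  cases b <;> simp [sgn]

theorem zpow_sgn_add_inv (x : F) (b : Bool) : x ^ sgn b + (x ^ sgn b)⁻¹ = x + x⁻¹ := by
  cases b <;> simp [sgn, add_comm]

theorem prod_filter_le {M : Type*} [CommMonoid M] {n : ℕ} (f : Fin n → Fin n → M) :
    ∏ p ∈ univ.filter (fun p : Fin n × Fin n => p.1 ≤ p.2), f p.1 p.2 =
      (∏ i, f i i) * ∏ i, ∏ j ∈ Ioi i, f i j := by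
  rw [prod_finset_product _ univ Ici (by simp), ← prod_mul_distrib]
  simp_rw [Ici_eq_cons_Ioi, prod_cons]

theorem det_of_sum {n β R : Type*} [Fintype n] [DecidableEq n] [Fintype β] [CommRing R]
    (v : n → β → n → R) :
    det (of fun i j => ∑ b, v i b j) = ∑ f : n → β, det (of fun i j => v i (f i) j) := by
  convert (detRowAlternating : (n → R) [⋀^n]→ₗ[R] R).toMultilinearMap.map_sum v using 2
  · congr 1
    ext i j
    simp
  · rfl

theorem det_submatrix_div_det_submatrix {n : Type*} [Fintype n] [DecidableEq n]
    (σ : Equiv.Perm n) (A B : Matrix n n F) :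
    (A.submatrix id σ).det / (B.submatrix id σ).det = A.det / B.det := by
  rw [Matrix.det_permute', Matrix.det_permute']
  refine mul_div_mul_left _ _ ?_
  rcases Int.units_eq_one_or (Equiv.Perm.sign σ) with h | h <;> simp [h]

theorem det_zpow_sub_zpow_neg_succ {n : ℕ} (x : Fin n → F) (hx : ∀ i, x i ≠ 0) :
    det (of fun i j : Fin n => x i ^ ((j : ℤ) + 1) - x i ^ (-((j : ℤ) + 1))) =
      (∏ i, (x i - (x i)⁻¹)) * det (vandermonde fun i => x i + (x i)⁻¹) := by
  have hS := monic_S_natCast_and_natDegree F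
  rw [Matrix.det_eval_matrixOfPolynomials_eq_det_vandermonde _ (fun j => Chebyshev.S F (j : ℕ))
    (fun j => (hS j).2) (fun j => (hS j).1), ← Matrix.det_mul_column]
  congr 1
  ext i j
  simp only [of_apply]
  rw [sub_inv_mul_eval_S_add_inv (hx i), zpow_neg, ← inv_zpow]
  norm_cast

theorem det_zpow_sub_zpow_neg_eq_sum {n : Type*} [Fintype n] [DecidableEq n]
    (x : n → F) (a : n → ℤ) :
    det (of fun i j => x i ^ a j - x i ^ (-a j)) =
      ∑ ε : n → Bool, (∏ i, -(sgn (ε i) : F)) *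
        det (of fun i j => (x i ^ sgn (ε i)) ^ (-a j)) := by
  have hrow : ∀ i j, x i ^ a j - x i ^ (-a j) =
      ∑ b : Bool, -(sgn b : F) * (x i ^ sgn b) ^ (-a j) := fun i j => by
    simp [sgn, sub_eq_neg_add]
  simp_rw [hrow]
  rw [det_of_sum]
  exact sum_congr rfl fun ε _ => Matrix.det_mul_column _ (of fun i j => _)

theorem det_pow_rev_eq_prod_mul_det_vandermonde_inv {n : ℕ} (w : Fin n → F)
    (hw : ∀ i, w i ≠ 0) :
    det (of fun i j : Fin n => w i ^ (n - 1 - (j : ℕ))) =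
      (∏ i, w i ^ (n - 1)) * det (vandermonde fun i => (w i)⁻¹) := by
  rw [← Matrix.det_mul_column]
  congr 1
  ext i j
  simp only [of_apply, Matrix.vandermonde_apply, inv_pow]
  rw [pow_sub₀ _ (hw i) (by omega)]

theorem det_vandermonde_inv_mul_prod_one_sub_mul {n : ℕ} (w : Fin n → F) (hw : ∀ i, w i ≠ 0) :
    det (vandermonde fun i => (w i)⁻¹) *
        ∏ p ∈ univ.filter (fun p : Fin n × Fin n => p.1 ≤ p.2), (1 - w p.1 * w p.2) =
      (∏ i, (1 - w i ^ 2)) * det (vandermonde fun i => w i + (w i)⁻¹) := by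
  rw [prod_filter_le (fun i j => 1 - w i * w j), Matrix.det_vandermonde, Matrix.det_vandermonde]
  simp_rw [← inv_sub_inv_mul_one_sub_mul (hw _) (hw _), prod_mul_distrib, sq]
  ring

theorem det_zpow_neg_eq_prod_mul_bialternant_mul {n : ℕ} (w : Fin n → F) (hw : ∀ i, w i ≠ 0)
    (hδ : det (of fun i j : Fin n => w i ^ (n - 1 - (j : ℕ))) ≠ 0) (g : ℕ) (μ : Fin n → ℕ) :
    det (of fun i j : Fin n => w i ^ (-((g : ℤ) + ((j : ℤ) + 1) - μ j))) =
      (∏ i, (w i)⁻¹ ^ (g + 1)) *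
        (det (of fun i j : Fin n => w i ^ (μ j + (n - 1 - (j : ℕ)))) /
          det (of fun i j : Fin n => w i ^ (n - 1 - (j : ℕ)))) *
        det (vandermonde fun i => (w i)⁻¹) := by
  have hentry : ∀ i j : Fin n, w i ^ (-((g : ℤ) + ((j : ℤ) + 1) - μ j)) =
      (w i)⁻¹ ^ (g + n) * w i ^ (μ j + (n - 1 - (j : ℕ))) := by
    intro i j
    rw [inv_pow, ← zpow_natCast, ← zpow_natCast, ← zpow_neg, ← zpow_add₀ (hw i)]
    congr 1
    have hj : ((n - 1 - (j : ℕ) : ℕ) : ℤ) = n - 1 - j := by have := j.isLt; omega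
    push_cast [hj]
    ring
  have hpow : ∀ i, (w i)⁻¹ ^ (g + n) * w i ^ (n - 1) = (w i)⁻¹ ^ (g + 1) := by
    intro i
    rw [show g + n = g + 1 + (n - 1) by have := i.isLt; omega, pow_add, mul_assoc, ← mul_pow,
      inv_mul_cancel₀ (hw i), one_pow, mul_one]
  set Q := det (of fun i j : Fin n => w i ^ (μ j + (n - 1 - (j : ℕ))))
  simp_rw [hentry]
  calc _ = (∏ i, (w i)⁻¹ ^ (g + n)) * Q := Matrix.det_mul_column _ (of fun i j => _)
    _ = (∏ i, (w i)⁻¹ ^ (g + n)) * (Q / det (of fun i j : Fin n => w i ^ (n - 1 - (j : ℕ))) *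
          det (of fun i j : Fin n => w i ^ (n - 1 - (j : ℕ)))) := by rw [div_mul_cancel₀ _ hδ]
    _ = _ := by
      rw [det_pow_rev_eq_prod_mul_det_vandermonde_inv w hw, ← prod_congr rfl fun i _ => hpow i,
        prod_mul_distrib]
      ring

theorem neg_sgn_prod_mul_det_div_eq {r : ℕ} (x : Fin r → F)
    (hx : ∀ i, x i - (x i)⁻¹ ≠ 0) (hy : Function.Injective fun i => x i + (x i)⁻¹)
    (ε : Fin r → Bool) (g : ℕ) (μ : Fin r → ℕ) :
    (∏ i, -(sgn (ε i) : F)) *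
        det (of fun i j : Fin r => (x i ^ sgn (ε i)) ^ (-((g : ℤ) + ((j : ℤ) + 1) - μ j))) /
        ((∏ i, (x i - (x i)⁻¹)) * det (vandermonde fun i => x i + (x i)⁻¹)) =
      det (of fun i j : Fin r => (x i ^ sgn (ε i)) ^ (μ j + (r - 1 - (j : ℕ)))) /
          det (of fun i j : Fin r => (x i ^ sgn (ε i)) ^ (r - 1 - (j : ℕ))) /
        ((∏ i, x i ^ (sgn (ε i) * (g : ℤ))) *
          ∏ p ∈ univ.filter (fun p : Fin r × Fin r => p.1 ≤ p.2),
            (1 - x p.1 ^ sgn (ε p.1) * x p.2 ^ sgn (ε p.2))) := by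
  set w : Fin r → F := fun i => x i ^ sgn (ε i)
  have hw : ∀ i, w i ≠ 0 := fun i => zpow_ne_zero _ fun h => hx i (by simp [h])
  have hterm : ∀ i, -(sgn (ε i) : F) * ((w i)⁻¹ ^ (g + 1) * w i ^ g) * (1 - w i ^ 2) =
      x i - (x i)⁻¹ := by
    intro i
    rw [pow_succ', mul_assoc _ _ (w i ^ g), ← mul_pow, inv_mul_cancel₀ (hw i), one_pow, mul_one,
      mul_assoc, ← neg_sgn_mul_inv_zpow_sgn_sub (x i) (ε i)]
    congr 1
    rw [mul_sub, mul_one, sq, ← mul_assoc, inv_mul_cancel₀ (hw i), one_mul]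
  have hVP := det_vandermonde_inv_mul_prod_one_sub_mul w hw
  rw [show (fun i => w i + (w i)⁻¹) = fun i => x i + (x i)⁻¹ from
    funext fun i => zpow_sgn_add_inv (x i) (ε i)] at hVP
  have hD : (∏ i, (x i - (x i)⁻¹)) * det (vandermonde fun i => x i + (x i)⁻¹) ≠ 0 :=
    mul_ne_zero (prod_ne_zero_iff.2 fun i _ => hx i) (Matrix.det_vandermonde_ne_zero_iff.2 hy)
  have hVP_ne : det (vandermonde fun i => (w i)⁻¹) *
      ∏ p ∈ univ.filter (fun p : Fin r × Fin r => p.1 ≤ p.2), (1 - w p.1 * w p.2) ≠ 0 := by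
    rw [hVP]
    refine mul_ne_zero (prod_ne_zero_iff.2 fun i _ h => hx i ?_)
      (Matrix.det_vandermonde_ne_zero_iff.2 hy)
    rw [← hterm i, h, mul_zero]
  have hδ : det (of fun i j : Fin r => w i ^ (r - 1 - (j : ℕ))) ≠ 0 := by
    rw [det_pow_rev_eq_prod_mul_det_vandermonde_inv w hw]
    exact mul_ne_zero (prod_ne_zero_iff.2 fun i _ => pow_ne_zero _ (hw i))
      (left_ne_zero_of_mul hVP_ne)
  have hg : ∏ i, x i ^ (sgn (ε i) * (g : ℤ)) = ∏ i, w i ^ g :=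
    prod_congr rfl fun i _ => by rw [zpow_mul, zpow_natCast]
  rw [det_zpow_neg_eq_prod_mul_bialternant_mul w hw hδ, hg, div_eq_div_iff hD
    (mul_ne_zero (prod_ne_zero_iff.2 fun i _ => pow_ne_zero _ (hw i)) (right_ne_zero_of_mul hVP_ne))]
  set s := det (of fun i j : Fin r => w i ^ (μ j + (r - 1 - (j : ℕ)))) /
    det (of fun i j : Fin r => w i ^ (r - 1 - (j : ℕ)))
  calc _ = s * ((∏ i, -(sgn (ε i) : F) * ((w i)⁻¹ ^ (g + 1) * w i ^ g) * (1 - w i ^ 2)) *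
        det (vandermonde fun i => x i + (x i)⁻¹)) := by
        rw [prod_mul_distrib, prod_mul_distrib, prod_mul_distrib]
        linear_combination
          (s * (∏ i, -(sgn (ε i) : F)) * (∏ i, (w i)⁻¹ ^ (g + 1)) * ∏ i, w i ^ g) * hVP
    _ = _ := by rw [prod_congr rfl fun i _ => hterm i]

theorem symplectic_bialternant_eq_sum {r : ℕ} (x : Fin r → F)
    (hx : ∀ i, x i - (x i)⁻¹ ≠ 0) (hy : Function.Injective fun i => x i + (x i)⁻¹)
    (g : ℕ) (μ : Fin r → ℕ) :
    det (of fun i j : Fin r =>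
        x i ^ ((g : ℤ) + ((r : ℤ) - (j : ℕ)) - (μ j.rev : ℕ)) -
          x i ^ (-((g : ℤ) + ((r : ℤ) - (j : ℕ)) - (μ j.rev : ℕ)))) /
      det (of fun i j : Fin r => x i ^ ((r : ℤ) - (j : ℕ)) - x i ^ (-((r : ℤ) - (j : ℕ)))) =
    ∑ ε : Fin r → Bool,
      det (of fun i j : Fin r => (x i ^ sgn (ε i)) ^ (μ j + (r - 1 - (j : ℕ)))) /
          det (of fun i j : Fin r => (x i ^ sgn (ε i)) ^ (r - 1 - (j : ℕ))) /
        ((∏ i, x i ^ (sgn (ε i) * (g : ℤ))) *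
          ∏ p ∈ univ.filter (fun p : Fin r × Fin r => p.1 ≤ p.2),
            (1 - x p.1 ^ sgn (ε p.1) * x p.2 ^ sgn (ε p.2))) := by
  have hA : (of fun i j : Fin r =>
        x i ^ ((g : ℤ) + ((r : ℤ) - (j : ℕ)) - (μ j.rev : ℕ)) -
          x i ^ (-((g : ℤ) + ((r : ℤ) - (j : ℕ)) - (μ j.rev : ℕ)))).submatrix id Fin.revPerm =
      of fun i j : Fin r => x i ^ ((g : ℤ) + ((j : ℤ) + 1) - μ j) -
        x i ^ (-((g : ℤ) + ((j : ℤ) + 1) - μ j)) := by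
    ext i j
    simp
  have hB : (of fun i j : Fin r =>
        x i ^ ((r : ℤ) - (j : ℕ)) - x i ^ (-((r : ℤ) - (j : ℕ)))).submatrix id Fin.revPerm =
      of fun i j : Fin r => x i ^ ((j : ℤ) + 1) - x i ^ (-((j : ℤ) + 1)) := by
    ext i j
    simp
  have hx0 : ∀ i, x i ≠ 0 := fun i h => hx i (by simp [h])
  rw [← det_submatrix_div_det_submatrix Fin.revPerm, hA, hB, det_zpow_sub_zpow_neg_eq_sum,
    det_zpow_sub_zpow_neg_succ x hx0, sum_div]
  exact sum_congr rfl fun ε _ => neg_sgn_prod_mul_det_div_eq x hx hy ε g μ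

end Field

theorem t_injective (r : ℕ) : Function.Injective (t r) :=
  (IsFractionRing.injective (MvPolynomial (Fin r) ℚ) (K r)).comp MvPolynomial.X_injective

theorem t_ne_zero (r : ℕ) (i : Fin r) : t r i ≠ 0 := by
  simp [t]

theorem t_mul_t_ne_one (r : ℕ) (i j : Fin r) : t r i * t r j ≠ 1 := by
  intro h
  rw [t, t, ← map_mul, ← map_one (algebraMap (MvPolynomial (Fin r) ℚ) (K r))] at h
  simpa using congrArg (MvPolynomial.eval 0) (IsFractionRing.injective _ _ h)

theorem statement_general (r : ℕ) (g : ℕ) (μ : Fin r → ℕ) :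
    Matrix.det (Matrix.of fun i j : Fin r =>
        t r i ^ ((g : ℤ) + ((r : ℤ) - (j : ℕ)) - (μ j.rev : ℕ)) -
          t r i ^ (-((g : ℤ) + ((r : ℤ) - (j : ℕ)) - (μ j.rev : ℕ)))) /
      Matrix.det (Matrix.of fun i j : Fin r =>
        t r i ^ ((r : ℤ) - (j : ℕ)) - t r i ^ (-((r : ℤ) - (j : ℕ)))) =
    ∑ ε : Fin r → Bool,
      schur r μ (fun i => t r i ^ sgn (ε i)) /
        ((∏ i, t r i ^ (sgn (ε i) * (g : ℤ))) *
          ∏ p ∈ Finset.univ.filter (fun p : Fin r × Fin r => p.1 ≤ p.2),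
            (1 - t r p.1 ^ sgn (ε p.1) * t r p.2 ^ sgn (ε p.2))) :=
  symplectic_bialternant_eq_sum (t r)
    (fun i => sub_inv_ne_zero (t_ne_zero r i) (t_mul_t_ne_one r i i))
    (injective_add_inv (t_injective r) (t_ne_zero r) (t_mul_t_ne_one r)) g μ

theorem statement (r : ℕ) (hr : 1 ≤ r) (g : ℕ) (μ : Fin r → ℕ) (hμ : Antitone μ) :
    Matrix.det (Matrix.of fun i j : Fin r =>
        t r i ^ ((g : ℤ) + ((r : ℤ) - (j : ℕ)) - (μ j.rev : ℕ)) -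
          t r i ^ (-((g : ℤ) + ((r : ℤ) - (j : ℕ)) - (μ j.rev : ℕ)))) /
      Matrix.det (Matrix.of fun i j : Fin r =>
        t r i ^ ((r : ℤ) - (j : ℕ)) - t r i ^ (-((r : ℤ) - (j : ℕ)))) =
    ∑ ε : Fin r → Bool,
      schur r μ (fun i => t r i ^ sgn (ε i)) /
        ((∏ i, t r i ^ (sgn (ε i) * (g : ℤ))) *
          ∏ p ∈ Finset.univ.filter (fun p : Fin r × Fin r => p.1 ≤ p.2),
            (1 - t r p.1 ^ sgn (ε p.1) * t r p.2 ^ sgn (ε p.2))) :=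
  statement_general r g μ

end Stmt9
end
end
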